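/- arXiv:2203.02695 — 10 statements merged into one kernel-verified Lean document; each statement's English description precedes it below -/
import Mathlib

section
/- For every natural number n, the number of isomorphism classes of interface-consistent starters on n points (discrete iposets (s,P,t):k→n with t bijective and s injective, up to iposet isomorphism) equals 2^n. -/
/-!
An interface-consistent starter is determined up to isomorphism by the set of target positions
whose points are also sources: interface consistency makes `t⁻¹ ∘ s` strictly increasing, so it
is the increasing enumeration of that set. Every subset of `Fin n` arises this way, from the
discrete iposet with `t = id` and `s` enumerating the subset, so the classes correspond to the
`2 ^ n` subsets of `Fin n`.
-/

/-- A poset with interfaces (iposet): a finite strict poset on `Fin n`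
together with injective source and target maps whose images lie in the
minimal respectively maximal elements. -/
structure Iposet where
  n : ℕ
  lt : Fin n → Fin n → Prop
  lt_irrefl : ∀ x, ¬ lt x x
  lt_trans : ∀ x y z, lt x y → lt y z → lt x z
  k : ℕ
  m : ℕ
  s : Fin k → Fin n
  t : Fin m → Fin n
  s_inj : Function.Injective s
  t_inj : Function.Injective t
  s_min : ∀ i x, ¬ lt x (s i)
  t_max : ∀ i x, ¬ lt (t i) x

namespace Iposet

/-- Isomorphism of iposets: a poset isomorphism commuting with the
source and target maps. -/
def Iso (P Q : Iposet) : Prop :=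
  ∃ (hk : P.k = Q.k) (hm : P.m = Q.m) (f : Fin P.n ≃ Fin Q.n),
    (∀ x y, P.lt x y ↔ Q.lt (f x) (f y)) ∧
    (∀ i, f (P.s i) = Q.s (Fin.cast hk i)) ∧
    (∀ i, f (P.t i) = Q.t (Fin.cast hm i))

/-- Isomorphism of underlying posets (interfaces disregarded). -/
def PosetIso (P Q : Iposet) : Prop :=
  ∃ f : Fin P.n ≃ Fin Q.n, ∀ x y, P.lt x y ↔ Q.lt (f x) (f y)

def Discrete (P : Iposet) : Prop := ∀ x y, ¬ P.lt x y

def Starter (P : Iposet) : Prop := Discrete P ∧ Function.Bijective P.t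

def Terminator (P : Iposet) : Prop := Discrete P ∧ Function.Bijective P.s

def Symmetry (P : Iposet) : Prop :=
  Discrete P ∧ Function.Bijective P.s ∧ Function.Bijective P.t

def InterfaceConsistent (P : Iposet) : Prop :=
  ∀ (i j : Fin P.k) (i' j' : Fin P.m),
    P.s i = P.t i' → P.s j = P.t j' → ((i : ℕ) < (j : ℕ) ↔ (i' : ℕ) < (j' : ℕ))

def IsMinEl (P : Iposet) (x : Fin P.n) : Prop := ∀ y, ¬ P.lt y x
def IsMaxEl (P : Iposet) (x : Fin P.n) : Prop := ∀ y, ¬ P.lt x y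

def LeftWink (P : Iposet) : Prop := ∀ x, IsMinEl P x ↔ ∃ i, P.s i = x
def RightWink (P : Iposet) : Prop := ∀ x, IsMaxEl P x ↔ ∃ i, P.t i = x
def Wink (P : Iposet) : Prop := LeftWink P ∧ RightWink P

/-- Witness data exhibiting `R` as the gluing composition `P * Q`. -/
structure GluingData (P Q R : Iposet) where
  hg : P.m = Q.k
  hk : R.k = P.k
  hm : R.m = Q.m
  f : Fin P.n → Fin R.n
  g : Fin Q.n → Fin R.n
  f_inj : Function.Injective f
  g_inj : Function.Injective g
  cover : ∀ x, (∃ a, f a = x) ∨ (∃ b, g b = x)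
  agree : ∀ i : Fin P.m, f (P.t i) = g (Q.s (Fin.cast hg i))
  overlap : ∀ a b, f a = g b → ∃ i, a = P.t i
  order : ∀ x y, R.lt x y ↔
      (∃ a b, f a = x ∧ f b = y ∧ P.lt a b) ∨
      (∃ a b, g a = x ∧ g b = y ∧ Q.lt a b) ∨
      (∃ a b, f a = x ∧ g b = y ∧ (∀ i, a ≠ P.t i) ∧ (∀ j, b ≠ Q.s j))
  s_eq : ∀ i, R.s i = f (P.s (Fin.cast hk i))
  t_eq : ∀ i, R.t i = g (Q.t (Fin.cast hm i))

/-- `R` is (isomorphic to) the gluing composition `P * Q`. -/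
def IsGluing (P Q R : Iposet) : Prop := Nonempty (GluingData P Q R)

/-- Witness data exhibiting `R` as the parallel composition `P ⊗ Q`. -/
structure ParData (P Q R : Iposet) where
  hk : R.k = P.k + Q.k
  hm : R.m = P.m + Q.m
  f : Fin P.n → Fin R.n
  g : Fin Q.n → Fin R.n
  f_inj : Function.Injective f
  g_inj : Function.Injective g
  cover : ∀ x, (∃ a, f a = x) ∨ (∃ b, g b = x)
  disjoint : ∀ a b, f a ≠ g b
  order : ∀ x y, R.lt x y ↔
      (∃ a b, f a = x ∧ f b = y ∧ P.lt a b) ∨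
      (∃ a b, g a = x ∧ g b = y ∧ Q.lt a b)
  s_eq₁ : ∀ i : Fin P.k, R.s (Fin.cast hk.symm (Fin.castAdd Q.k i)) = f (P.s i)
  s_eq₂ : ∀ i : Fin Q.k, R.s (Fin.cast hk.symm (Fin.natAdd P.k i)) = g (Q.s i)
  t_eq₁ : ∀ i : Fin P.m, R.t (Fin.cast hm.symm (Fin.castAdd Q.m i)) = f (P.t i)
  t_eq₂ : ∀ i : Fin Q.m, R.t (Fin.cast hm.symm (Fin.natAdd P.m i)) = g (Q.t i)

/-- `R` is (isomorphic to) the parallel composition `P ⊗ Q`. -/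
def IsPar (P Q R : Iposet) : Prop := Nonempty (ParData P Q R)

/-- Gluing-parallel iposets: built from the (four) iposets on a single
point by finitely many gluing and parallel compositions, or empty. -/
inductive GP : Iposet → Prop
  | empty (P : Iposet) : P.n = 0 → GP P
  | single (P : Iposet) : P.n = 1 → GP P
  | glue (P Q R : Iposet) : GP P → GP Q → IsGluing P Q R → GP R
  | par (P Q R : Iposet) : GP P → GP Q → IsPar P Q R → GP R

end Iposet

namespace Iposet

open Function Finset

/- Read in `ℕ`, so that isomorphic iposets, whose index types `Fin P.m` and `Fin Q.m` agree only
propositionally, have literally equal invariants. -/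
def sharedTargets (P : Iposet) : Set ℕ :=
  Fin.val '' (P.t ⁻¹' Set.range P.s)

theorem val_mem_sharedTargets {P : Iposet} (j : Fin P.m) :
    (j : ℕ) ∈ P.sharedTargets ↔ P.t j ∈ Set.range P.s :=
  Fin.val_injective.mem_set_image

theorem Iso.sharedTargets_eq {P Q : Iposet} (h : Iso P Q) :
    P.sharedTargets = Q.sharedTargets := by
  -- destructuring turns `k` and `m` into variables, so the index equations can be substituted
  cases P; cases Q
  obtain ⟨hk, hm, f, -, hs, ht⟩ := h
  dsimp only at hk hm hs ht
  subst hk hm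
  simp only [Fin.cast_eq_self] at hs ht
  ext i
  simp [sharedTargets, ← hs, ← ht]

theorem m_eq_n_of_bijective_t {P : Iposet} (ht : Bijective P.t) : P.m = P.n :=
  Fin.equiv_iff_eq.mp ⟨Equiv.ofBijective P.t ht⟩

theorem strictMono_symm_comp_s {P : Iposet} (ht : Bijective P.t) (hic : P.InterfaceConsistent) :
    StrictMono ((Equiv.ofBijective P.t ht).symm ∘ P.s) := fun a b hab =>
  (hic a b _ _ (Equiv.ofBijective_apply_symm_apply _ ht _).symm
    (Equiv.ofBijective_apply_symm_apply _ ht _).symm).mp hab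

def ofFinset {n : ℕ} (S : Finset (Fin n)) : Iposet where
  n := n
  lt _ _ := False
  lt_irrefl _ := not_false
  lt_trans _ _ _ h _ := h
  k := S.card
  m := n
  s := S.orderEmbOfFin rfl
  t := id
  s_inj := (S.orderEmbOfFin rfl).injective
  t_inj := injective_id
  s_min _ _ h := h
  t_max _ _ h := h

section ofFinset

variable {n : ℕ} (S : Finset (Fin n))

theorem discrete_ofFinset : (ofFinset S).Discrete := fun _ _ h => h

theorem bijective_ofFinset_t : Bijective (ofFinset S).t := bijective_id

theorem interfaceConsistent_ofFinset : (ofFinset S).InterfaceConsistent := by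
  rintro i j i' j' (rfl : _ = i') (rfl : _ = j')
  exact (S.orderEmbOfFin rfl).lt_iff_lt.symm

theorem sharedTargets_ofFinset : (ofFinset S).sharedTargets = Fin.val '' (S : Set (Fin n)) := by
  simp [sharedTargets, ofFinset]

end ofFinset

theorem iso_ofFinset {P : Iposet} (hd : P.Discrete) (ht : Bijective P.t)
    (hic : P.InterfaceConsistent) {n : ℕ} (hm : P.m = n) (S : Finset (Fin n))
    (hS : ∀ x : Fin n, x ∈ S ↔ (x : ℕ) ∈ P.sharedTargets) : Iso (ofFinset S) P := by
  obtain ⟨_, _, _, _, k, m, s, t, _, _, _, _⟩ := P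
  dsimp only at hd ht hic hS hm
  subst hm
  set e := Equiv.ofBijective t ht
  have hmono := strictMono_symm_comp_s ht hic
  have hrange : ∀ x, x ∈ S ↔ x ∈ Set.range (e.symm ∘ s) := by
    intro x
    rw [hS, val_mem_sharedTargets]
    simp [e, Equiv.symm_apply_eq]
  have hk : S.card = k := by
    rw [← Fintype.card_fin k, ← card_univ,
      ← card_image_of_injective _ hmono.injective]
    congr 1
    ext x
    simp [hrange, e]
  have henum := orderEmbOfFin_unique hk (fun x => (hrange _).2 ⟨x, rfl⟩) hmono
  refine ⟨hk, rfl, e, fun _ _ => iff_of_false not_false (hd _ _), fun i => ?_, fun _ => rfl⟩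
  change e (S.orderEmbOfFin rfl i) = s (Fin.cast hk i)
  have hcast : S.orderEmbOfFin rfl i = S.orderEmbOfFin hk (Fin.cast hk i) :=
    orderEmbOfFin_eq_orderEmbOfFin_iff.mpr rfl
  rw [hcast, ← henum]
  exact e.apply_symm_apply _

end Iposet

open Iposet in
/-- The number of isomorphism classes of interface-consistent starters on
`n` points equals `2^n`. -/
theorem count_ic_starters (n : ℕ) :
    Nat.card (Quot (fun (P Q : {P : Iposet // P.n = n ∧ Discrete P ∧
        Function.Bijective P.t ∧ InterfaceConsistent P}) => Iso P.1 Q.1)) = 2 ^ n := by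
  classical
  let e : Quot (fun (P Q : {P : Iposet // P.n = n ∧ Discrete P ∧
      Function.Bijective P.t ∧ InterfaceConsistent P}) => Iso P.1 Q.1) ≃ Finset (Fin n) :=
    { toFun := Quot.lift
        (fun P => Finset.univ.filter fun x : Fin n => (x : ℕ) ∈ P.1.sharedTargets)
        fun _ _ h => by simp only [h.sharedTargets_eq]
      invFun S := Quot.mk _ ⟨ofFinset S, rfl, discrete_ofFinset S, bijective_ofFinset_t S,
        interfaceConsistent_ofFinset S⟩
      left_inv := Quot.ind fun ⟨_, hn, hd, ht, hic⟩ => Quot.sound <|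
        iso_ofFinset hd ht hic ((m_eq_n_of_bijective_t ht).trans hn) _
          fun _ => Finset.mem_filter_univ _
      right_inv S := by ext; simp [sharedTargets_ofFinset, Fin.val_inj] }
  rw [Nat.card_congr e, Nat.card_eq_fintype_card, Fintype.card_finset, Fintype.card_fin]
end

section
/- For every natural number n, the number of isomorphism classes of starters on n points (discrete iposets with bijective target map, no interface-consistency requirement) equals ∑_{k=0}^n n!/k!. -/
/-! A starter on `n` points is determined up to isomorphism by its number `k` of sources
together with the injection `t⁻¹ ∘ s : [k] ↪ [n]` locating the sources among the targets, and
every such injection comes from a starter. So the classes number `∑ₖ n!/(n-k)!`, which is the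
claimed sum read backwards. -/

theorem Nat.card_quot_eq_of_surjective {α β : Type*} {r : α → α → Prop} (f : α → β)
    (hr : ∀ a b, r a b ↔ f a = f b) (hf : Function.Surjective f) :
    Nat.card (Quot r) = Nat.card β := by
  obtain rfl : r = (Setoid.ker f).r := funext₂ fun a b => propext (hr a b)
  exact Nat.card_congr (Setoid.quotientKerEquivOfSurjective f hf)

theorem Nat.sum_range_descFactorial (n : ℕ) :
    ∑ k ∈ Finset.range (n + 1), n.descFactorial k =
      ∑ k ∈ Finset.range (n + 1), n.factorial / k.factorial := by
  rw [← Finset.sum_range_reflect (fun k => n.factorial / k.factorial)]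
  refine Finset.sum_congr rfl fun k hk => ?_
  rw [Nat.descFactorial_eq_div (Nat.lt_succ_iff.mp (Finset.mem_range.mp hk))]
  congr 3

theorem card_sigma_fin_embedding (n : ℕ) :
    Nat.card (Σ k : Fin (n + 1), Fin k ↪ Fin n) =
      ∑ k ∈ Finset.range (n + 1), n.factorial / k.factorial := by
  rw [Nat.card_sigma]
  simp only [Nat.card_eq_fintype_card, Fintype.card_embedding_eq, Fintype.card_fin]
  rw [Fin.sum_univ_eq_sum_range (n.descFactorial ·), Nat.sum_range_descFactorial]

theorem Fin.sigma_mk_embedding_eq_iff {n a b : ℕ} {ha : a < n + 1} {hb : b < n + 1}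
    {u : Fin a ↪ Fin n} {v : Fin b ↪ Fin n} :
    (⟨⟨a, ha⟩, u⟩ : Σ k : Fin (n + 1), Fin k ↪ Fin n) = ⟨⟨b, hb⟩, v⟩ ↔
      ∃ h : a = b, ∀ i, u i = v (Fin.cast h i) := by
  constructor
  · rintro ⟨⟩
    exact ⟨rfl, fun _ => rfl⟩
  · rintro ⟨rfl, huv⟩
    obtain rfl : u = v := DFunLike.ext _ _ huv
    rfl

namespace Iposet

noncomputable def sourceIndex (P : Iposet) (ht : Function.Bijective P.t) : Fin P.k ↪ Fin P.m :=
  (⟨P.s, P.s_inj⟩ : Fin P.k ↪ Fin P.n).trans (Equiv.ofBijective P.t ht).symm.toEmbedding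

theorem t_sourceIndex (P : Iposet) (ht : Function.Bijective P.t) (i : Fin P.k) :
    P.t (P.sourceIndex ht i) = P.s i :=
  Equiv.ofBijective_apply_symm_apply P.t ht (P.s i)

theorem iso_iff_sourceIndex {P Q : Iposet} (hdP : Discrete P) (hdQ : Discrete Q)
    (htP : Function.Bijective P.t) (htQ : Function.Bijective Q.t) :
    Iso P Q ↔ ∃ (hk : P.k = Q.k) (hm : P.m = Q.m),
      ∀ i, Fin.cast hm (P.sourceIndex htP i) = Q.sourceIndex htQ (Fin.cast hk i) := by
  constructor
  · rintro ⟨hk, hm, f, -, hs, ht⟩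
    refine ⟨hk, hm, fun i => htQ.1 ?_⟩
    rw [t_sourceIndex, ← hs, ← ht, t_sourceIndex]
  · rintro ⟨hk, hm, hidx⟩
    let eP := Equiv.ofBijective P.t htP
    let eQ := Equiv.ofBijective Q.t htQ
    refine ⟨hk, hm, eP.symm.trans ((finCongr hm).trans eQ),
      fun x y => iff_of_false (hdP x y) (hdQ _ _), fun i => ?_, fun i => ?_⟩
    · simp only [Equiv.trans_apply, finCongr_apply]
      exact (congrArg Q.t (hidx i)).trans (t_sourceIndex Q htQ _)
    · simp [eP, eQ, Equiv.ofBijective_symm_apply_apply]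

abbrev StarterOn (n : ℕ) := {P : Iposet // P.n = n ∧ Discrete P ∧ Function.Bijective P.t}

theorem StarterOn.m_eq {n : ℕ} (P : StarterOn n) : P.1.m = n :=
  (Fin.equiv_iff_eq.mp ⟨Equiv.ofBijective _ P.2.2.2⟩).trans P.2.1

noncomputable def StarterOn.code {n : ℕ} (P : StarterOn n) :
    Σ k : Fin (n + 1), Fin k ↪ Fin n :=
  ⟨⟨P.1.k, Nat.lt_succ_of_le ((Fin.le_of_injective P.1.s P.1.s_inj).trans_eq P.2.1)⟩,
    (P.1.sourceIndex P.2.2.2).trans (finCongr P.m_eq).toEmbedding⟩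

theorem StarterOn.iso_iff_code_eq {n : ℕ} (P Q : StarterOn n) :
    Iso P.1 Q.1 ↔ P.code = Q.code := by
  rw [iso_iff_sourceIndex P.2.2.1 Q.2.2.1 P.2.2.2 Q.2.2.2, code, code,
    Fin.sigma_mk_embedding_eq_iff]
  simp [Fin.ext_iff, P.m_eq, Q.m_eq]

def discreteStarter {n k : ℕ} (u : Fin k ↪ Fin n) : Iposet where
  n := n
  lt _ _ := False
  lt_irrefl _ := id
  lt_trans _ _ _ h _ := h
  k := k
  m := n
  s := u
  t := id
  s_inj := u.injective
  t_inj := Function.injective_id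
  s_min _ _ := id
  t_max _ _ := id

theorem StarterOn.code_surjective (n : ℕ) : Function.Surjective (@StarterOn.code n) := by
  rintro ⟨k, u⟩
  refine ⟨⟨discreteStarter u, rfl, fun _ _ => id, Function.bijective_id⟩, ?_⟩
  rw [code, Fin.sigma_mk_embedding_eq_iff]
  exact ⟨rfl, fun i => Equiv.ofBijective_symm_apply_apply id Function.bijective_id (u i)⟩

end Iposet

open Iposet in
/-- The number of isomorphism classes of starters on `n` points equals
`∑_{k=0}^n n!/k!`. -/
theorem count_starters (n : ℕ) :
    Nat.card (Quot (fun (P Q : {P : Iposet // P.n = n ∧ Discrete P ∧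
        Function.Bijective P.t}) => Iso P.1 Q.1)) =
      ∑ k ∈ Finset.range (n + 1), n.factorial / k.factorial := by
  rw [Nat.card_quot_eq_of_surjective StarterOn.code StarterOn.iso_iff_code_eq
    (StarterOn.code_surjective n), card_sigma_fin_embedding]
end

section
/- For every natural number n, the number of isomorphism classes of interface-consistent discrete iposets on n points equals ∑_{s=0}^n ∑_{t=0}^n ∑_{u=max(0,s+t−n)}^{min(s,t)} C(s,u)·C(t,u). -/
/-!
Up to isomorphism, a discrete iposet is determined by its numbers `k`, `m` of sources and
targets and by the sets `A ⊆ [k]`, `B ⊆ [m]` of source and target indices that land on a point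
shared by a source and a target: interface consistency forces the shared points to identify the
`r`-th element of `A` with the `r`-th element of `B`. Conversely, every such datum with
`|A| = |B| = u` and `k + m - u ≤ n` is realised on `n` points, so the classes are counted by
choosing `A` and `B`.
-/

open Finset Function

section Matching

variable {α β : Type*} [LinearOrder α] [LinearOrder β]

def Finset.Matched (A : Finset α) (B : Finset β) (x : α) (y : β) : Prop :=
  x ∈ A ∧ y ∈ B ∧ #{z ∈ A | z < x} = #{w ∈ B | w < y}

theorem Finset.strictMonoOn_card_filter_lt (A : Finset α) :
    StrictMonoOn (fun x => #{z ∈ A | z < x}) A := by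
  intro x hx y _ hxy
  refine card_lt_card (ssubset_iff_of_subset ?_ |>.2 ⟨x, ?_, ?_⟩)
  · intro z hz
    simp only [mem_filter] at hz ⊢
    exact ⟨hz.1, hz.2.trans hxy⟩
  · simpa using ⟨hx, hxy⟩
  · simp

theorem Finset.card_filter_lt_lt_card {A : Finset α} {x : α} (hx : x ∈ A) :
    #{z ∈ A | z < x} < #A :=
  card_lt_card (filter_ssubset.2 ⟨x, hx, lt_irrefl x⟩)

theorem Finset.exists_card_filter_lt_eq {A : Finset α} {r : ℕ} (hr : r < #A) :
    ∃ x ∈ A, #{z ∈ A | z < x} = r := by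
  have hsurj := surjOn_of_injOn_of_card_le (fun x => #{z ∈ A | z < x}) (t := range #A)
    (fun x hx => mem_range.2 (card_filter_lt_lt_card hx))
    (strictMonoOn_card_filter_lt A).injOn (by simp)
  simpa using hsurj (mem_range.2 hr)

variable {A : Finset α} {B : Finset β} {x x' : α} {y y' : β}

theorem Finset.Matched.lt_iff_lt (h : A.Matched B x y) (h' : A.Matched B x' y') :
    x < x' ↔ y < y' := by
  rw [← (strictMonoOn_card_filter_lt A).lt_iff_lt h.1 h'.1,
    ← (strictMonoOn_card_filter_lt B).lt_iff_lt h.2.1 h'.2.1, h.2.2, h'.2.2]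

theorem Finset.exists_matched_right (hAB : #A = #B) (hx : x ∈ A) : ∃ y, A.Matched B x y := by
  obtain ⟨y, hy, hrank⟩ := exists_card_filter_lt_eq (hAB ▸ card_filter_lt_lt_card hx)
  exact ⟨y, hx, hy, hrank.symm⟩

theorem Finset.exists_matched_left (hAB : #A = #B) (hy : y ∈ B) : ∃ x, A.Matched B x y := by
  obtain ⟨x, hx, hrank⟩ := exists_card_filter_lt_eq (hAB ▸ card_filter_lt_lt_card hy)
  exact ⟨x, hx, hy, hrank⟩

variable {R : α → β → Prop}

theorem eq_of_rel_of_lt_iff_lt (hR : ∀ x y x' y', R x y → R x' y' → (x < x' ↔ y < y'))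
    (h : R x y) (h' : R x' y) : x = x' :=
  le_antisymm (not_lt.1 fun hlt => ((hR _ _ _ _ h' h).1 hlt).false)
    (not_lt.1 fun hlt => ((hR _ _ _ _ h h').1 hlt).false)

theorem Finset.card_le_card_of_lt_iff_lt
    (hR : ∀ x y x' y', R x y → R x' y' → (x < x' ↔ y < y'))
    (hAB : ∀ x ∈ A, ∃ y ∈ B, R x y) : #A ≤ #B :=
  card_le_card_of_forall_subsingleton R hAB fun _ _ _ hx _ hx' =>
    eq_of_rel_of_lt_iff_lt hR hx.2 hx'.2

theorem Finset.card_eq_of_lt_iff_lt (hA : ∀ x, x ∈ A ↔ ∃ y, R x y)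
    (hB : ∀ y, y ∈ B ↔ ∃ x, R x y) (hR : ∀ x y x' y', R x y → R x' y' → (x < x' ↔ y < y')) :
    #A = #B := by
  have hR' : ∀ y x y' x', R x y → R x' y' → (y < y' ↔ x < x') :=
    fun _ _ _ _ h h' => (hR _ _ _ _ h h').symm
  refine le_antisymm (card_le_card_of_lt_iff_lt hR fun x hx => ?_)
    (card_le_card_of_lt_iff_lt (R := swap R) hR' fun y hy => ?_)
  · obtain ⟨y, hxy⟩ := (hA x).1 hx
    exact ⟨y, (hB y).2 ⟨x, hxy⟩, hxy⟩
  · obtain ⟨x, hxy⟩ := (hB y).1 hy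
    exact ⟨x, (hA x).2 ⟨y, hxy⟩, hxy⟩

theorem Finset.matched_of_lt_iff_lt (hA : ∀ x, x ∈ A ↔ ∃ y, R x y)
    (hB : ∀ y, y ∈ B ↔ ∃ x, R x y) (hR : ∀ x y x' y', R x y → R x' y' → (x < x' ↔ y < y'))
    (h : R x y) : A.Matched B x y := by
  have hR' : ∀ y x y' x', R x y → R x' y' → (y < y' ↔ x < x') :=
    fun _ _ _ _ h h' => (hR _ _ _ _ h h').symm
  -- `R` restricts to a bijection between the elements of `A` below `x` and those of `B` below `y`.
  refine ⟨(hA x).2 ⟨y, h⟩, (hB y).2 ⟨x, h⟩, le_antisymm ?_ ?_⟩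
  · refine card_le_card_of_lt_iff_lt hR fun x' hx' => ?_
    simp only [mem_filter] at hx' ⊢
    obtain ⟨y', hxy'⟩ := (hA x').1 hx'.1
    exact ⟨y', ⟨(hB y').2 ⟨x', hxy'⟩, (hR _ _ _ _ hxy' h).1 hx'.2⟩, hxy'⟩
  · refine card_le_card_of_lt_iff_lt (R := swap R) hR' fun y' hy' => ?_
    simp only [mem_filter] at hy' ⊢
    obtain ⟨x', hxy'⟩ := (hB y').1 hy'.1
    exact ⟨x', ⟨(hA x').2 ⟨y', hxy'⟩, (hR _ _ _ _ hxy' h).2 hy'.2⟩, hxy'⟩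

theorem Finset.rel_iff_matched_of_lt_iff_lt (hA : ∀ x, x ∈ A ↔ ∃ y, R x y)
    (hB : ∀ y, y ∈ B ↔ ∃ x, R x y) (hR : ∀ x y x' y', R x y → R x' y' → (x < x' ↔ y < y')) :
    R x y ↔ A.Matched B x y := by
  refine ⟨matched_of_lt_iff_lt hA hB hR, fun hm => ?_⟩
  obtain ⟨y', hxy'⟩ := (hA x).1 hm.1
  have hm' := matched_of_lt_iff_lt hA hB hR hxy'
  obtain rfl : y' = y :=
    (strictMonoOn_card_filter_lt B).injOn hm'.2.1 hm.2.1 (hm'.2.2.symm.trans hm.2.2)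
  exact hxy'

end Matching

theorem Finset.map_valEmbedding_filter_mem {a : ℕ} {A : Finset ℕ}
    [DecidablePred fun i : Fin a => (i : ℕ) ∈ A] (hA : ∀ x ∈ A, x < a) :
    ({i : Fin a | (i : ℕ) ∈ A} : Finset (Fin a)).map Fin.valEmbedding = A := by
  conv_rhs => rw [← map_valEmbedding_attachFin hA]
  congr 1
  ext
  simp

section MatchedFin

variable {a b : ℕ} {A B : Finset ℕ}

theorem Finset.exists_matched_fin_iff_mem_left (hB : ∀ y ∈ B, y < b) (hAB : #A = #B) {x : ℕ} :
    (∃ j : Fin b, A.Matched B x j) ↔ x ∈ A := by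
  refine ⟨fun ⟨_, h⟩ => h.1, fun hx => ?_⟩
  obtain ⟨y, h⟩ := exists_matched_right hAB hx
  exact ⟨⟨y, hB y h.2.1⟩, h⟩

theorem Finset.exists_matched_fin_iff_mem_right (hA : ∀ x ∈ A, x < a) (hAB : #A = #B) {y : ℕ} :
    (∃ i : Fin a, A.Matched B i y) ↔ y ∈ B := by
  refine ⟨fun ⟨_, h⟩ => h.2.1, fun hy => ?_⟩
  obtain ⟨x, h⟩ := exists_matched_left hAB hy
  exact ⟨⟨x, hA x h.1⟩, h⟩

end MatchedFin

theorem exists_equiv_extend_pair {X Y ι κ : Type*} [Fintype X] [Fintype Y]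
    (hXY : Fintype.card X = Fintype.card Y) {s : ι → X} {t : κ → X} {s' : ι → Y} {t' : κ → Y}
    (hs : Injective s) (ht : Injective t) (hs' : Injective s') (ht' : Injective t')
    (hst : ∀ i j, s i = t j ↔ s' i = t' j) :
    ∃ e : X ≃ Y, (∀ i, e (s i) = s' i) ∧ ∀ j, e (t j) = t' j := by
  classical
  obtain ⟨e₀⟩ := Fintype.card_eq.1 hXY
  let f : X → Y := extend s s' (extend t t' e₀)
  have hfs : ∀ i, f (s i) = s' i := hs.extend_apply _ _
  have hft : ∀ j, f (t j) = t' j := by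
    intro j
    by_cases h : ∃ i, s i = t j
    · obtain ⟨i, hi⟩ := h
      rw [← hi, hfs, (hst i j).1 hi]
    · exact (extend_apply' _ _ _ h).trans (ht.extend_apply _ _ _)
  have hinj : Set.InjOn f (Set.range s ∪ Set.range t) := by
    rintro _ (⟨i, rfl⟩ | ⟨j, rfl⟩) _ (⟨i', rfl⟩ | ⟨j', rfl⟩) h <;>
      simp only [hfs, hft] at h
    · rw [hs' h]
    · exact (hst _ _).2 h
    · exact ((hst _ _).2 h.symm).symm
    · rw [ht' h]
  obtain ⟨g, hg⟩ := Set.MapsTo.exists_equiv_extend_of_card_eq (t := univ) (by simpa)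
    (fun _ _ => mem_univ _) hinj
  refine ⟨g.trans (Equiv.subtypeUnivEquiv mem_univ), fun i => ?_, fun j => ?_⟩
  · simpa [hfs] using hg (s i) (.inl ⟨i, rfl⟩)
  · simpa [hft] using hg (t j) (.inr ⟨j, rfl⟩)

theorem exists_injective_pair_eq_iff {X ι κ : Type*} [Fintype X] [Fintype ι] [Fintype κ]
    (R : ι → κ → Prop) (hR₁ : ∀ i j j', R i j → R i j' → j = j')
    (hR₂ : ∀ i i' j, R i j → R i' j → i = i')
    (hcard : Nat.card ι + Nat.card κ ≤ Nat.card X + Nat.card {j // ∃ i, R i j}) :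
    ∃ (s : ι → X) (t : κ → X), Injective s ∧ Injective t ∧ ∀ i j, s i = t j ↔ R i j := by
  classical
  obtain ⟨e⟩ : Nonempty (ι ⊕ {j // ¬∃ i, R i j} ↪ X) := by
    refine Function.Embedding.nonempty_of_card_le ?_
    simp only [Nat.card_eq_fintype_card] at hcard
    have := Fintype.card_subtype_le fun j => ∃ i, R i j
    rw [Fintype.card_sum, Fintype.card_subtype_compl]
    omega
  let t₀ : κ → ι ⊕ {j // ¬∃ i, R i j} := fun j =>
    if h : ∃ i, R i j then .inl h.choose else .inr ⟨j, h⟩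
  have ht₀ : ∀ i j, .inl i = t₀ j ↔ R i j := by
    intro i j
    by_cases h : ∃ i, R i j
    · simp only [t₀, dif_pos h, Sum.inl.injEq]
      exact ⟨fun hi => hi ▸ h.choose_spec, fun hij => hR₂ _ _ _ hij h.choose_spec⟩
    · simp only [t₀, dif_neg h, reduceCtorEq, false_iff]
      exact fun hij => h ⟨i, hij⟩
  have ht₀_inj : Injective t₀ := by
    intro j j' hjj'
    by_cases h : ∃ i, R i j
    · have hj : R h.choose j := (ht₀ _ _).1 (by simp only [t₀, dif_pos h])
      exact hR₁ _ _ _ hj ((ht₀ _ _).1 ((by simp only [t₀, dif_pos h] : _ = t₀ j).trans hjj'))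
    · have h' : ¬∃ i, R i j' := fun ⟨i, hi⟩ =>
        h ⟨i, (ht₀ _ _).1 (((ht₀ _ _).2 hi).trans hjj'.symm)⟩
      simpa [t₀, dif_neg h, dif_neg h'] using hjj'
  exact ⟨e ∘ .inl, e ∘ t₀, e.injective.comp Sum.inl_injective, e.injective.comp ht₀_inj,
    fun i j => e.injective.eq_iff.trans (ht₀ i j)⟩

theorem Nat.card_quot_eq_card_of_iff {α β : Type*} (r : α → α → Prop) (f : α → β)
    (hf : ∀ x y, r x y ↔ f x = f y) (S : Finset β) (hS : ∀ b, b ∈ S ↔ ∃ a, f a = b) :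
    Nat.card (Quot r) = #S := by
  obtain rfl : r = Setoid.ker f := funext₂ fun x y => propext (hf x y)
  have hrange : Set.range f = S := Set.ext fun b => (hS b).symm
  exact (Nat.card_congr (Setoid.quotientKerEquivRange f)).trans (by simp [hrange])

namespace Iposet

def Overlap (P : Iposet) (x y : ℕ) : Prop :=
  ∃ (i : Fin P.k) (j : Fin P.m), (i : ℕ) = x ∧ (j : ℕ) = y ∧ P.s i = P.t j

open Classical in
def srcOverlap (P : Iposet) : Finset ℕ :=
  ({i | ∃ j, P.s i = P.t j} : Finset (Fin P.k)).map Fin.valEmbedding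

open Classical in
def tgtOverlap (P : Iposet) : Finset ℕ :=
  ({j | ∃ i, P.s i = P.t j} : Finset (Fin P.m)).map Fin.valEmbedding

variable {P Q : Iposet} {x y : ℕ}

theorem overlap_val_iff {i : Fin P.k} {j : Fin P.m} : P.Overlap i j ↔ P.s i = P.t j := by
  constructor
  · rintro ⟨i', j', hi, hj, h⟩
    rwa [Fin.ext hi, Fin.ext hj] at h
  · exact fun h => ⟨i, j, rfl, rfl, h⟩

theorem mem_srcOverlap : x ∈ P.srcOverlap ↔ ∃ y, P.Overlap x y := by
  simp only [srcOverlap, mem_map, mem_filter, mem_univ, true_and, Fin.valEmbedding_apply, Overlap]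
  constructor
  · rintro ⟨i, ⟨j, h⟩, rfl⟩
    exact ⟨j, i, j, rfl, rfl, h⟩
  · rintro ⟨_, i, j, rfl, rfl, h⟩
    exact ⟨i, ⟨j, h⟩, rfl⟩

theorem mem_tgtOverlap : y ∈ P.tgtOverlap ↔ ∃ x, P.Overlap x y := by
  simp only [tgtOverlap, mem_map, mem_filter, mem_univ, true_and, Fin.valEmbedding_apply, Overlap]
  constructor
  · rintro ⟨j, ⟨i, h⟩, rfl⟩
    exact ⟨i, i, j, rfl, rfl, h⟩
  · rintro ⟨_, i, j, rfl, rfl, h⟩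
    exact ⟨j, ⟨i, h⟩, rfl⟩

theorem srcOverlap_subset_range (P : Iposet) : P.srcOverlap ⊆ range P.k := by
  intro x hx
  obtain ⟨_, i, j, rfl, -, -⟩ := mem_srcOverlap.1 hx
  exact mem_range.2 i.2

theorem tgtOverlap_subset_range (P : Iposet) : P.tgtOverlap ⊆ range P.m := by
  intro y hy
  obtain ⟨_, i, j, -, rfl, -⟩ := mem_tgtOverlap.1 hy
  exact mem_range.2 j.2

theorem k_add_m_le (P : Iposet) : P.k + P.m ≤ P.n + #P.tgtOverlap := by
  classical
  have hinj : Injective (Sum.elim P.s fun j : {j // ¬∃ i, P.s i = P.t j} => P.t j) :=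
    P.s_inj.sumElim (P.t_inj.comp Subtype.val_injective) fun i j h => j.2 ⟨i, h⟩
  have hle := Fintype.card_le_of_injective _ hinj
  have hcompl := Fintype.card_subtype_compl fun j => ∃ i, P.s i = P.t j
  have hsub := Fintype.card_subtype_le fun j => ∃ i, P.s i = P.t j
  simp only [Fintype.card_sum, Fintype.card_fin] at hle hcompl hsub
  rw [tgtOverlap, card_map, ← Fintype.card_subtype]
  omega

theorem InterfaceConsistent.lt_iff_lt (hP : P.InterfaceConsistent) :
    ∀ x y x' y', P.Overlap x y → P.Overlap x' y' → (x < x' ↔ y < y') := by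
  rintro _ _ _ _ ⟨i, i', rfl, rfl, h⟩ ⟨j, j', rfl, rfl, h'⟩
  exact hP i j i' j' h h'

theorem InterfaceConsistent.overlap_iff_matched (hP : P.InterfaceConsistent) :
    P.Overlap x y ↔ P.srcOverlap.Matched P.tgtOverlap x y :=
  rel_iff_matched_of_lt_iff_lt (fun _ => mem_srcOverlap) (fun _ => mem_tgtOverlap) hP.lt_iff_lt

theorem InterfaceConsistent.card_srcOverlap_eq (hP : P.InterfaceConsistent) :
    #P.srcOverlap = #P.tgtOverlap :=
  card_eq_of_lt_iff_lt (fun _ => mem_srcOverlap) (fun _ => mem_tgtOverlap) hP.lt_iff_lt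

theorem Iso.overlap_iff (h : P.Iso Q) : P.Overlap x y ↔ Q.Overlap x y := by
  obtain ⟨hk, hm, f, -, hs, ht⟩ := h
  constructor
  · rintro ⟨i, j, rfl, rfl, hij⟩
    exact ⟨Fin.cast hk i, Fin.cast hm j, rfl, rfl, by rw [← hs, ← ht, hij]⟩
  · rintro ⟨i, j, rfl, rfl, hij⟩
    refine ⟨Fin.cast hk.symm i, Fin.cast hm.symm j, rfl, rfl, f.injective ?_⟩
    simpa [hs, ht] using hij

/-- `⟨k, m, u, A, B⟩`: `k` sources, `m` targets, and the sets `A` of source indices and `B` of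
target indices lying on a shared point, both of size `u`. -/
abbrev InterfaceData : Type := (_ : ℕ) × (_ : ℕ) × (_ : ℕ) × (Finset ℕ × Finset ℕ)

def invariant (P : Iposet) : InterfaceData :=
  ⟨P.k, P.m, #P.srcOverlap, P.srcOverlap, P.tgtOverlap⟩

theorem Iso.invariant_eq (h : P.Iso Q) : P.invariant = Q.invariant := by
  obtain ⟨hk, hm, -⟩ := id h
  have hsrc : P.srcOverlap = Q.srcOverlap := ext fun x => by
    simp only [mem_srcOverlap, h.overlap_iff]
  have htgt : P.tgtOverlap = Q.tgtOverlap := ext fun y => by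
    simp only [mem_tgtOverlap, h.overlap_iff]
  simp [invariant, hk, hm, hsrc, htgt]

theorem iso_of_invariant_eq (hn : P.n = Q.n) (hdP : P.Discrete) (hdQ : Q.Discrete)
    (hcP : P.InterfaceConsistent) (hcQ : Q.InterfaceConsistent)
    (h : P.invariant = Q.invariant) : P.Iso Q := by
  simp only [invariant, Sigma.mk.injEq, Prod.mk.injEq, heq_eq_eq] at h
  obtain ⟨hk, hm, -, hsrc, htgt⟩ := h
  have hst : ∀ i j, P.s i = P.t j ↔ Q.s (Fin.cast hk i) = Q.t (Fin.cast hm j) := by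
    intro i j
    rw [← overlap_val_iff, ← overlap_val_iff, hcP.overlap_iff_matched, hcQ.overlap_iff_matched,
      hsrc, htgt, Fin.val_cast, Fin.val_cast]
  obtain ⟨e, hs, ht⟩ := exists_equiv_extend_pair (by simp [hn]) P.s_inj P.t_inj
    (Q.s_inj.comp (Fin.cast_injective hk)) (Q.t_inj.comp (Fin.cast_injective hm)) hst
  exact ⟨hk, hm, e, fun x y => iff_of_false (hdP x y) (hdQ _ _), hs, ht⟩

def invariants (n : ℕ) : Finset InterfaceData :=
  (range (n + 1)).sigma fun a => (range (n + 1)).sigma fun b =>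
    (Icc (a + b - n) (min a b)).sigma fun u =>
      (range a).powersetCard u ×ˢ (range b).powersetCard u

theorem mem_invariants {n a b u : ℕ} {A B : Finset ℕ} :
    ⟨a, b, u, A, B⟩ ∈ invariants n ↔ a ≤ n ∧ b ≤ n ∧ a + b ≤ n + u ∧ u ≤ a ∧ u ≤ b ∧
      A ⊆ range a ∧ #A = u ∧ B ⊆ range b ∧ #B = u := by
  simp only [invariants, mem_sigma, mem_range, mem_Icc, mem_product, mem_powersetCard,
    le_min_iff, Nat.lt_add_one_iff, Nat.sub_le_iff_le_add', and_assoc]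

theorem card_invariants (n : ℕ) : #(invariants n) =
    ∑ a ∈ range (n + 1), ∑ b ∈ range (n + 1), ∑ u ∈ Icc (a + b - n) (min a b),
      a.choose u * b.choose u := by
  simp [invariants, card_sigma, card_powersetCard]

theorem InterfaceConsistent.invariant_mem_invariants (hP : P.InterfaceConsistent) :
    P.invariant ∈ invariants P.n := by
  have hk := Fintype.card_le_of_injective _ P.s_inj
  have hm := Fintype.card_le_of_injective _ P.t_inj
  have hsrc := card_le_card P.srcOverlap_subset_range
  have htgt := card_le_card P.tgtOverlap_subset_range
  have hkm := P.k_add_m_le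
  simp only [Fintype.card_fin, card_range] at hk hm hsrc htgt
  rw [← hP.card_srcOverlap_eq] at htgt hkm
  exact mem_invariants.2 ⟨hk, hm, hkm, hsrc, htgt, P.srcOverlap_subset_range, rfl,
    P.tgtOverlap_subset_range, hP.card_srcOverlap_eq.symm⟩

theorem exists_of_mem_invariants {n : ℕ} {q : InterfaceData} (hq : q ∈ invariants n) :
    ∃ P : Iposet, P.n = n ∧ P.Discrete ∧ P.InterfaceConsistent ∧ P.invariant = q := by
  classical
  obtain ⟨a, b, u, A, B⟩ := q
  obtain ⟨-, -, hab, -, hub, hA, rfl, hB, hBA⟩ := mem_invariants.1 hq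
  have hA' : ∀ x ∈ A, x < a := fun x hx => mem_range.1 (hA hx)
  have hB' : ∀ y ∈ B, y < b := fun y hy => mem_range.1 (hB hy)
  let R : Fin a → Fin b → Prop := fun i j => A.Matched B i j
  have hR : ∀ i j i' j', R i j → R i' j' → (i < i' ↔ j < j') :=
    fun _ _ _ _ h h' => h.lt_iff_lt h'
  have hR' : ∀ j i j' i', R i j → R i' j' → (j < j' ↔ i < i') :=
    fun _ _ _ _ h h' => (h.lt_iff_lt h').symm
  have hcard : Nat.card {j // ∃ i, R i j} = #B := by
    simp only [R, exists_matched_fin_iff_mem_right hA' hBA.symm, Nat.card_eq_fintype_card,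
      Fintype.card_subtype, ← card_map Fin.valEmbedding, map_valEmbedding_filter_mem hB']
  obtain ⟨s, t, hs, ht, hst⟩ := exists_injective_pair_eq_iff (X := Fin n) R
    (fun _ _ _ h h' => eq_of_rel_of_lt_iff_lt (R := swap R) hR' h h')
    (fun _ _ _ h h' => eq_of_rel_of_lt_iff_lt hR h h') (by
      rw [hcard]
      simp only [Nat.card_eq_fintype_card, Fintype.card_fin]
      omega)
  refine ⟨⟨n, fun _ _ => False, fun _ => id, fun _ _ _ h _ => h, a, b, s, t, hs, ht,
    fun _ _ => id, fun _ _ => id⟩, rfl, fun _ _ => id, ?_, ?_⟩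
  · intro i j i' j' h h'
    exact ((hst _ _).1 h).lt_iff_lt ((hst _ _).1 h')
  · simp only [invariant, srcOverlap, tgtOverlap, hst, R,
      exists_matched_fin_iff_mem_left hB' hBA.symm, exists_matched_fin_iff_mem_right hA' hBA.symm,
      map_valEmbedding_filter_mem hA', map_valEmbedding_filter_mem hB']

end Iposet

open Iposet in
/-- The number of isomorphism classes of interface-consistent discrete
iposets on `n` points. -/
theorem count_ic_discrete (n : ℕ) :
    Nat.card (Quot (fun (P Q : {P : Iposet // P.n = n ∧ Discrete P ∧
        InterfaceConsistent P}) => Iso P.1 Q.1)) =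
      ∑ a ∈ Finset.range (n + 1), ∑ b ∈ Finset.range (n + 1),
        ∑ u ∈ Finset.Icc (max 0 (a + b - n)) (min a b),
          a.choose u * b.choose u := by
  rw [Nat.card_quot_eq_card_of_iff _ (fun P => P.1.invariant) ?_ (invariants n) ?_,
    card_invariants]
  · simp only [zero_max]
  · rintro ⟨P, hPn, hdP, hcP⟩ ⟨Q, hQn, hdQ, hcQ⟩
    exact ⟨Iso.invariant_eq, iso_of_invariant_eq (hPn.trans hQn.symm) hdP hdQ hcP hcQ⟩
  · refine fun q => ⟨fun hq => ?_, ?_⟩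
    · obtain ⟨P, hPn, hdP, hcP, rfl⟩ := exists_of_mem_invariants hq
      exact ⟨⟨P, hPn, hdP, hcP⟩, rfl⟩
    · rintro ⟨⟨P, rfl, -, hcP⟩, rfl⟩
      exact hcP.invariant_mem_invariants
end

section
/- For every natural number n, ∑_{s=0}^n ∑_{t=0}^n ∑_{u=max(0,s+t−n)}^{min(s,t)} C(s,u)·C(t,u) = ∑_{i=0}^n C(n+2+i, n−i). -/
/-!
Writing `s = u + a` and `t = u + b`, the left side is `∑_u ∑_{a + b ≤ n - u} C(u+a, u) C(u+b, u)`.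
For fixed `u` the hockey-stick identity sums out `b`, and the remaining sum over `a` is the
upper-index Vandermonde identity, i.e. the coefficient of `X^(n-u)` in
`(1 - X)^-(u+1) * (1 - X)^-(u+2) = (1 - X)^-(2u+3)`, namely `C(n+u+2, 2u+2) = C(n+u+2, n-u)`.
-/

open Finset PowerSeries

theorem Nat.sum_antidiagonal_add_choose_mul_add_choose (u v k : ℕ) :
    ∑ ij ∈ antidiagonal k, (u + ij.1).choose u * (v + ij.2).choose v =
      (u + v + 1 + k).choose (u + v + 1) := by
  have h := congrArg (fun f : ℤ⟦X⟧ˣ => coeff k f.val) (invOneSubPow_add ℤ (u + 1) (v + 1))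
  rw [show u + 1 + (v + 1) = u + v + 1 + 1 by ring] at h
  simp only [Units.val_mul, invOneSubPow_val_succ_eq_mk_add_choose, coeff_mk, coeff_mul] at h
  exact_mod_cast h.symm

theorem sum_Icc_max_min_comm {M : Type*} [AddCommMonoid M] (n : ℕ) (f : ℕ → ℕ → ℕ → M) :
    ∑ s ∈ range (n + 1), ∑ t ∈ range (n + 1), ∑ u ∈ Icc (max 0 (s + t - n)) (min s t), f s t u =
      ∑ u ∈ range (n + 1), ∑ s ∈ Icc u n, ∑ t ∈ Icc u (n + u - s), f s t u := by
  calc _ = ∑ s ∈ range (n + 1), ∑ u ∈ range (s + 1), ∑ t ∈ Icc u (n + u - s), f s t u := by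
        refine sum_congr rfl fun s hs => sum_comm' fun t u => ?_
        simp only [mem_range, mem_Icc] at hs ⊢
        omega
    _ = _ := sum_comm' fun s u => by simp only [mem_range, mem_Icc]; omega

theorem sum_Icc_choose_mul_sum_Icc_choose (n u : ℕ) (hu : u ≤ n) :
    ∑ s ∈ Icc u n, ∑ t ∈ Icc u (n + u - s), s.choose u * t.choose u =
      (n + 2 + u).choose (n - u) := by
  calc _ = ∑ s ∈ Icc u n, s.choose u * (n + u - s + 1).choose (u + 1) := by
        simp_rw [← mul_sum, Nat.sum_Icc_choose]
    _ = ∑ a ∈ range (n - u + 1), (u + a).choose u * (u + 1 + (n - u - a)).choose (u + 1) := by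
        rw [← Ico_add_one_right_eq_Icc, sum_Ico_eq_sum_range, Nat.sub_add_comm hu]
        refine sum_congr rfl fun a ha => ?_
        rw [mem_range] at ha
        congr 2
        omega
    _ = ∑ ij ∈ antidiagonal (n - u), (u + ij.1).choose u * (u + 1 + ij.2).choose (u + 1) :=
        (Nat.sum_antidiagonal_eq_sum_range_succ
          (fun a b => (u + a).choose u * (u + 1 + b).choose (u + 1)) _).symm
    _ = (n + 2 + u).choose (u + (u + 1) + 1) := by
        rw [Nat.sum_antidiagonal_add_choose_mul_add_choose]
        congr 1
        omega
    _ = _ := Nat.choose_symm_of_eq_add (by omega)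

/-- A version of Vandermonde's identity:
`∑_{s,t=0}^n ∑_{u=max(0,s+t−n)}^{min(s,t)} C(s,u)·C(t,u) = ∑_{i=0}^n C(n+2+i, n−i)`. -/
theorem vandermonde_variant (n : ℕ) :
    ∑ s ∈ Finset.range (n + 1), ∑ t ∈ Finset.range (n + 1),
        ∑ u ∈ Finset.Icc (max 0 (s + t - n)) (min s t),
          s.choose u * t.choose u =
      ∑ i ∈ Finset.range (n + 1), (n + 2 + i).choose (n - i) := by
  rw [sum_Icc_max_min_comm n fun s t u => s.choose u * t.choose u]
  exact sum_congr rfl fun u hu =>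
    sum_Icc_choose_mul_sum_Icc_choose n u (Nat.lt_succ_iff.mp (mem_range.mp hu))
end

section
/- A finite poset is series-parallel if and only if it does not contain the poset N (four points a,b,c,d with a<c, b<c, b<d and no other relations) as an induced subposet. -/
/-- A finite (strict) poset on `Fin n`. -/
structure FPoset where
  n : ℕ
  lt : Fin n → Fin n → Prop
  lt_irrefl : ∀ x, ¬ lt x x
  lt_trans : ∀ x y z, lt x y → lt y z → lt x z

namespace FPoset

/-- `R` is (isomorphic to) the serial composition (ordinal sum) of `P` and `Q`. -/
def IsSer (P Q R : FPoset) : Prop :=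
  ∃ (f : Fin P.n → Fin R.n) (g : Fin Q.n → Fin R.n),
    Function.Injective f ∧ Function.Injective g ∧
    (∀ x, (∃ a, f a = x) ∨ (∃ b, g b = x)) ∧
    (∀ a b, f a ≠ g b) ∧
    (∀ x y, R.lt x y ↔
      (∃ a b, f a = x ∧ f b = y ∧ P.lt a b) ∨
      (∃ a b, g a = x ∧ g b = y ∧ Q.lt a b) ∨
      (∃ a b, f a = x ∧ g b = y))

/-- `R` is (isomorphic to) the parallel composition (disjoint union) of `P` and `Q`. -/
def IsPar (P Q R : FPoset) : Prop :=
  ∃ (f : Fin P.n → Fin R.n) (g : Fin Q.n → Fin R.n),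
    Function.Injective f ∧ Function.Injective g ∧
    (∀ x, (∃ a, f a = x) ∨ (∃ b, g b = x)) ∧
    (∀ a b, f a ≠ g b) ∧
    (∀ x y, R.lt x y ↔
      (∃ a b, f a = x ∧ f b = y ∧ P.lt a b) ∨
      (∃ a b, g a = x ∧ g b = y ∧ Q.lt a b))

/-- Series-parallel posets: empty, or obtained from the singleton poset by
finitely many serial and parallel compositions. -/
inductive SP : FPoset → Prop
  | empty (P : FPoset) : P.n = 0 → SP P
  | single (P : FPoset) : P.n = 1 → SP P
  | ser (P Q R : FPoset) : SP P → SP Q → IsSer P Q R → SP R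
  | par (P Q R : FPoset) : SP P → SP Q → IsPar P Q R → SP R

/-- `Q` occurs as an induced subposet of `P`. -/
def InducedSub (Q P : FPoset) : Prop :=
  ∃ f : Fin Q.n → Fin P.n, Function.Injective f ∧
    ∀ a b, Q.lt a b ↔ P.lt (f a) (f b)

/-- The poset `N`: four points `0,1,2,3` with `0<2`, `1<2`, `1<3`. -/
def Nposet : FPoset where
  n := 4
  lt x y := (x = 0 ∧ y = 2) ∨ (x = 1 ∧ y = 2) ∨ (x = 1 ∧ y = 3)
  lt_irrefl := by decide
  lt_trans := by decide

end FPoset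

/-! The composition of two `N`-free posets is `N`-free because `N` is connected (so it cannot
straddle a parallel composition) and is not an ordinal sum (so it cannot straddle a serial one).

Conversely, every transitive orientation of an induced path `a - b - c - d` is a copy of `N`, so
the comparability graph of an `N`-free poset is `P₄`-free. By Seinsche's theorem a `P₄`-free graph
on at least two vertices is disconnected or has a disconnected complement. For its inductive step,
delete a vertex `v` and separate the rest, say in the graph; if the whole vertex set is connected
in the graph and in its complement, a non-neighbour of `v`, a neighbour of `v` adjacent to it on
the same side, `v`, and a neighbour of `v` on the other side form an induced `P₄`.
A disconnected comparability graph is a parallel decomposition. If the incomparability graph is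
disconnected, every pair across the cut is comparable, and the points lying below some point on
the other side of the cut form a nonempty proper set lying entirely below its complement: a serial
decomposition. Induction on the size concludes. -/

open Finset

namespace SimpleGraph

variable {V : Type*} (G : SimpleGraph V)

def IsInducedP4 (a b c d : V) : Prop :=
  G.Adj a b ∧ G.Adj b c ∧ G.Adj c d ∧ ¬G.Adj a c ∧ ¬G.Adj b d ∧ ¬G.Adj a d

variable {G} in
lemma IsInducedP4.compl {a b c d : V} (h : G.IsInducedP4 a b c d) : Gᶜ.IsInducedP4 b d a c := by
  obtain ⟨hab, hbc, hcd, hac, hbd, had⟩ := h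
  simp only [IsInducedP4, compl_adj, not_and, not_not]
  refine ⟨⟨?_, hbd⟩, ⟨?_, fun h => had h.symm⟩, ⟨?_, hac⟩, fun _ => hab.symm, fun _ => hcd.symm,
    fun _ => hbc⟩ <;> rintro rfl
  exacts [had hab, hac hcd.symm, had hcd]

variable [DecidableEq V]

def IsSeparation (s A : Finset V) : Prop :=
  A ⊆ s ∧ A.Nonempty ∧ (s \ A).Nonempty ∧ ∀ a ∈ A, ∀ b ∈ s \ A, ¬G.Adj a b

variable {G}

lemma IsSeparation.sdiff {s A : Finset V} (h : G.IsSeparation s A) : G.IsSeparation s (s \ A) := by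
  obtain ⟨hAs, hA, hsA, hsep⟩ := h
  refine ⟨sdiff_subset, hsA, by rwa [Finset.sdiff_sdiff_eq_self hAs], fun b hb a ha hba => ?_⟩
  rw [Finset.sdiff_sdiff_eq_self hAs] at ha
  exact hsep a ha b hb hba.symm

lemma exists_isInducedP4_of_isSeparation_erase {s A : Finset V} {v x : V}
    (hGs : ∀ A, ¬G.IsSeparation s A) (hA : G.IsSeparation (s.erase v) A) (hv : v ∈ s)
    (hxA : x ∈ A) (hvx : ¬G.Adj v x) : ∃ a b c d, G.IsInducedP4 a b c d := by
  classical
  obtain ⟨hAs, -, hB, hsep⟩ := hA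
  obtain ⟨z, hzB, hvz⟩ : ∃ z ∈ s.erase v \ A, G.Adj v z := by
    by_contra! h
    refine hGs (s.erase v \ A) ⟨fun b hb => ?_, hB, ⟨v, by simp [hv]⟩, fun b hb y hy hby => ?_⟩
    · grind
    · by_cases hyv : y = v
      · exact h b hb (hyv ▸ hby.symm)
      · exact hsep y (by grind) b hb hby.symm
  obtain ⟨x', hx', y, hy, hx'y⟩ : ∃ x' ∈ A.filter (¬G.Adj v ·), ∃ y ∈ s \ A.filter (¬G.Adj v ·),
      G.Adj x' y := by
    by_contra! h
    exact hGs _ ⟨fun a ha => by grind, ⟨x, by simp [hxA, hvx]⟩, ⟨v, by grind⟩, h⟩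
  rw [mem_filter] at hx'
  have hyv : y ≠ v := by
    rintro rfl
    exact hx'.2 hx'y.symm
  have hyA : y ∈ A := by
    by_contra hyA
    exact hsep x' hx'.1 y (by grind) hx'y
  have hvy : G.Adj v y := by simpa [hyA] using (mem_sdiff.1 hy).2
  -- `x' - y - v - z` is an induced path: `x', y ∈ A`, and `A` sends no edge to `z`.
  exact ⟨x', y, v, z, hx'y, hvy.symm, hvz, fun h => hx'.2 h.symm, hsep y hyA z hzB,
    hsep x' hx'.1 z hzB⟩

lemma exists_adj_of_forall_not_isSeparation {s : Finset V} {v : V}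
    (hGs : ∀ A, ¬G.IsSeparation s A) (hv : v ∈ s) (hs : (s.erase v).Nonempty) :
    ∃ x ∈ s.erase v, G.Adj v x := by
  by_contra! hx
  exact hGs {v} ⟨by simpa using hv, singleton_nonempty v, by rwa [sdiff_singleton_eq_erase],
    by simpa [sdiff_singleton_eq_erase] using hx⟩

lemma not_isSeparation_erase (hG : ∀ a b c d, ¬G.IsInducedP4 a b c d) {s A : Finset V} {v : V}
    (hGs : ∀ A, ¬G.IsSeparation s A) (hGcs : ∀ A, ¬Gᶜ.IsSeparation s A) (hv : v ∈ s) :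
    ¬G.IsSeparation (s.erase v) A := by
  intro hA
  obtain ⟨x, hx, hGcvx⟩ := exists_adj_of_forall_not_isSeparation hGcs hv (hA.2.1.mono hA.1)
  have hvx : ¬G.Adj v x := ((compl_adj G v x).1 hGcvx).2
  obtain ⟨a, b, c, d, hP4⟩ : ∃ a b c d, G.IsInducedP4 a b c d := by
    by_cases hxA : x ∈ A
    · exact exists_isInducedP4_of_isSeparation_erase hGs hA hv hxA hvx
    · exact exists_isInducedP4_of_isSeparation_erase hGs hA.sdiff hv (by grind) hvx
  exact hG a b c d hP4

theorem exists_isSeparation_or_compl (hG : ∀ a b c d, ¬G.IsInducedP4 a b c d) (s : Finset V)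
    (hs : 2 ≤ #s) : ∃ A, G.IsSeparation s A ∨ Gᶜ.IsSeparation s A := by
  induction s using Finset.strongInduction with
  | H s ih =>
  by_contra! hcon
  obtain ⟨v, hv⟩ : s.Nonempty := card_pos.1 (by omega)
  have hs' : 1 ≤ #(s.erase v) := by rw [card_erase_of_mem hv]; omega
  obtain hs1 | hs2 := hs'.eq_or_lt
  · obtain ⟨w, hw⟩ := card_eq_one.1 hs1.symm
    obtain ⟨x, hx, hGx⟩ :=
      exists_adj_of_forall_not_isSeparation (fun A => (hcon A).1) hv ⟨w, by simp [hw]⟩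
    obtain ⟨y, hy, hGcy⟩ :=
      exists_adj_of_forall_not_isSeparation (fun A => (hcon A).2) hv ⟨w, by simp [hw]⟩
    simp only [hw, mem_singleton] at hx hy
    rw [hx] at hGx
    rw [hy] at hGcy
    exact ((compl_adj G v w).1 hGcy).2 hGx
  · have hGc : ∀ a b c d, ¬Gᶜ.IsInducedP4 a b c d := fun a b c d h =>
      hG b d a c (by simpa only [compl_compl] using h.compl)
    obtain ⟨A, hA | hA⟩ := ih _ (erase_ssubset hv) hs2
    · exact not_isSeparation_erase hG (fun A => (hcon A).1) (fun A => (hcon A).2) hv hA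
    · exact not_isSeparation_erase hGc (fun A => (hcon A).2) (by simpa using fun A => (hcon A).1)
        hv hA

end SimpleGraph

namespace FPoset

variable {P Q R : FPoset}

def IsEmb (P Q : FPoset) (f : Fin P.n → Fin Q.n) : Prop :=
  Function.Injective f ∧ ∀ a b, P.lt a b ↔ Q.lt (f a) (f b)

lemma InducedSub.trans (hQP : InducedSub Q P) (hPR : InducedSub P R) : InducedSub Q R := by
  obtain ⟨f, hf⟩ := hQP
  obtain ⟨g, hg⟩ := hPR
  exact ⟨g ∘ f, hg.1.comp hf.1, fun a b => (hf.2 a b).trans (hg.2 _ _)⟩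

lemma InducedSub.n_le (h : InducedSub Q P) : Q.n ≤ P.n := by
  simpa using Fintype.card_le_of_injective _ h.choose_spec.1

lemma inducedSub_of_forall_mem_range {f : Fin P.n → Fin R.n} (hf : IsEmb P R f)
    {e : Fin Q.n → Fin R.n} (he : IsEmb Q R e) (h : ∀ i, ∃ a, f a = e i) : InducedSub Q P := by
  choose e' he' using h
  refine ⟨e', fun i j hij => he.1 ?_, fun i j => ?_⟩
  · rw [← he', ← he', hij]
  · rw [he.2, hf.2, he', he']

lemma isEmb_of_lt_iff {f : Fin P.n → Fin R.n} (hf : Function.Injective f)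
    {C : Fin R.n → Fin R.n → Prop}
    (h : ∀ x y, R.lt x y ↔ (∃ a b, f a = x ∧ f b = y ∧ P.lt a b) ∨ C x y)
    (hC : ∀ a b, ¬C (f a) (f b)) : IsEmb P R f :=
  ⟨hf, fun a b => by simp [h, hf.eq_iff, hC]⟩

instance : DecidableRel Nposet.lt := fun (i j : Fin 4) =>
  inferInstanceAs (Decidable ((i = 0 ∧ j = 2) ∨ (i = 1 ∧ j = 2) ∨ (i = 1 ∧ j = 3)))

lemma Nposet.exists_not_lt_across : ∀ s : Finset (Fin Nposet.n), s.Nonempty → sᶜ.Nonempty →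
    ∃ i ∉ s, ∃ j ∈ s, ¬Nposet.lt i j := by
  decide

lemma Nposet.exists_lt_across : ∀ s : Finset (Fin Nposet.n), s.Nonempty → sᶜ.Nonempty →
    ∃ i ∈ s, ∃ j ∉ s, Nposet.lt i j ∨ Nposet.lt j i := by
  decide

lemma exists_cut_of_not_inducedSub {T : FPoset} {f : Fin P.n → Fin R.n} {g : Fin Q.n → Fin R.n}
    {e : Fin T.n → Fin R.n} (hf : IsEmb P R f) (hg : IsEmb Q R g)
    (hcov : ∀ x, (∃ a, f a = x) ∨ ∃ b, g b = x) (he : IsEmb T R e)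
    (hP : ¬InducedSub T P) (hQ : ¬InducedSub T Q) :
    ∃ s : Finset (Fin T.n), s.Nonempty ∧ sᶜ.Nonempty ∧
      (∀ i ∉ s, ∃ a, f a = e i) ∧ ∀ j ∈ s, ∃ b, g b = e j := by
  classical
  refine ⟨univ.filter fun j => ∃ b, g b = e j, ?_, ?_, fun i hi => ?_,
    fun j hj => by simpa using hj⟩
  · by_contra h
    exact hP (inducedSub_of_forall_mem_range hf he fun i =>
      (hcov (e i)).resolve_right fun hi => h ⟨i, by simpa using hi⟩)
  · by_contra h
    refine hQ (inducedSub_of_forall_mem_range hg he fun i => ?_)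
    by_contra hi
    exact h ⟨i, by simpa using hi⟩
  · exact (hcov (e i)).resolve_right (by simpa using hi)

lemma IsSer.not_inducedSub_Nposet (h : IsSer P Q R) (hP : ¬InducedSub Nposet P)
    (hQ : ¬InducedSub Nposet Q) : ¬InducedSub Nposet R := by
  obtain ⟨f, g, hf, hg, hcov, hfg, hlt⟩ := h
  have hgf : ∀ a b, g b ≠ f a := fun a b => (hfg a b).symm
  have hfe : IsEmb P R f := isEmb_of_lt_iff hf hlt fun a b => by
    rintro (⟨_, _, h, -⟩ | ⟨_, _, -, h⟩) <;> exact hgf _ _ h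
  have hge : IsEmb Q R g := isEmb_of_lt_iff hg (fun x y => (hlt x y).trans or_left_comm)
    fun a b => by rintro (⟨_, _, h, -⟩ | ⟨_, _, h, -⟩) <;> exact hfg _ _ h
  rintro ⟨e, he⟩
  obtain ⟨s, hs, hs', hf_s, hg_s⟩ := exists_cut_of_not_inducedSub hfe hge hcov he hP hQ
  obtain ⟨i, hi, j, hj, hij⟩ := Nposet.exists_not_lt_across s hs hs'
  obtain ⟨a, ha⟩ := hf_s i hi
  obtain ⟨b, hb⟩ := hg_s j hj
  exact hij ((he.2 i j).2 ((hlt _ _).2 (Or.inr (Or.inr ⟨a, b, ha, hb⟩))))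

lemma IsPar.not_inducedSub_Nposet (h : IsPar P Q R) (hP : ¬InducedSub Nposet P)
    (hQ : ¬InducedSub Nposet Q) : ¬InducedSub Nposet R := by
  obtain ⟨f, g, hf, hg, hcov, hfg, hlt⟩ := h
  have hgf : ∀ a b, g b ≠ f a := fun a b => (hfg a b).symm
  have hfe : IsEmb P R f := isEmb_of_lt_iff hf hlt fun _ _ ⟨_, _, h, _⟩ => hgf _ _ h
  have hge : IsEmb Q R g := isEmb_of_lt_iff hg (fun x y => (hlt x y).trans or_comm)
    fun _ _ ⟨_, _, h, _⟩ => hfg _ _ h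
  rintro ⟨e, he⟩
  obtain ⟨s, hs, hs', hf_s, hg_s⟩ := exists_cut_of_not_inducedSub hfe hge hcov he hP hQ
  obtain ⟨j, hj, i, hi, hij⟩ := Nposet.exists_lt_across s hs hs'
  obtain ⟨a, ha⟩ := hf_s i hi
  obtain ⟨b, hb⟩ := hg_s j hj
  rw [he.2, he.2, ← ha, ← hb, hlt, hlt] at hij
  simp [hfg, hgf] at hij

lemma SP.not_inducedSub_Nposet (h : SP P) : ¬InducedSub Nposet P := by
  induction h with
  | empty P h => exact fun hN => absurd hN.n_le (by rw [h]; decide)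
  | single P h => exact fun hN => absurd hN.n_le (by rw [h]; decide)
  | ser P Q R _ _ h ihP ihQ => exact h.not_inducedSub_Nposet ihP ihQ
  | par P Q R _ _ h ihP ihQ => exact h.not_inducedSub_Nposet ihP ihQ

def comparabilityGraph (P : FPoset) : SimpleGraph (Fin P.n) where
  Adj x y := P.lt x y ∨ P.lt y x
  symm := ⟨fun _ _ => Or.symm⟩
  loopless := ⟨fun x h => h.elim (P.lt_irrefl x) (P.lt_irrefl x)⟩

lemma inducedSub_Nposet_of_lt {a b c d : Fin P.n} (hac : P.lt a c) (hbc : P.lt b c)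
    (hbd : P.lt b d) (hab : ¬P.comparabilityGraph.Adj a b) (had : ¬P.comparabilityGraph.Adj a d)
    (hcd : ¬P.comparabilityGraph.Adj c d) : InducedSub Nposet P := by
  have irr := P.lt_irrefl
  have tr := P.lt_trans
  simp only [comparabilityGraph, not_or] at hab had hcd
  suffices ∃ f : Fin 4 → Fin P.n, Function.Injective f ∧
      ∀ i j : Fin 4, Nposet.lt i j ↔ P.lt (f i) (f j) from this
  refine ⟨![a, b, c, d], fun i j h => ?_, fun i j => ?_⟩
  · fin_cases i <;> fin_cases j <;>
      simp only [Fin.isValue, Fin.mk_one, Fin.zero_eta, Fin.reduceFinMk, Matrix.cons_val,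
        Matrix.cons_val_zero, Matrix.cons_val_one] at h ⊢ <;> grind
  · fin_cases i <;> fin_cases j <;>
      simp only [Nposet, Fin.isValue, Fin.mk_one, Fin.zero_eta, Fin.reduceFinMk, Matrix.cons_val,
        Matrix.cons_val_zero, Matrix.cons_val_one] <;> grind

lemma inducedSub_Nposet_of_isInducedP4 {a b c d : Fin P.n}
    (h : P.comparabilityGraph.IsInducedP4 a b c d) : InducedSub Nposet P := by
  obtain ⟨hab, hbc, hcd, hac, hbd, had⟩ := h
  have tr := P.lt_trans
  rcases hab with hab | hba
  · have hcb : P.lt c b := hbc.resolve_left fun hbc => hac (.inl (tr _ _ _ hab hbc))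
    have hcd : P.lt c d := hcd.resolve_right fun hdc => hbd (.inr (tr _ _ _ hdc hcb))
    exact inducedSub_Nposet_of_lt hab hcb hcd hac had hbd
  · have hbc : P.lt b c := hbc.resolve_right fun hcb => hac (.inr (tr _ _ _ hcb hba))
    have hdc : P.lt d c := hcd.resolve_left fun hcd => hbd (.inl (tr _ _ _ hbc hcd))
    exact inducedSub_Nposet_of_lt hdc hbc hba (mt Or.symm hbd) (mt Or.symm had) (mt Or.symm hac)

lemma exists_minimal (P : FPoset) (x : Fin P.n) : ∃ m, ∀ y, ¬P.lt y m := by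
  have : IsTrans (Fin P.n) P.lt := ⟨P.lt_trans⟩
  have : Std.Irrefl P.lt := ⟨P.lt_irrefl⟩
  obtain ⟨m, -, hm⟩ := (Finite.wellFounded_of_trans_of_irrefl P.lt).has_min Set.univ ⟨x, trivial⟩
  exact ⟨m, fun y => hm y trivial⟩

def dual (P : FPoset) : FPoset where
  n := P.n
  lt a b := P.lt b a
  lt_irrefl := P.lt_irrefl
  lt_trans a b c hab hbc := P.lt_trans c b a hbc hab

lemma exists_maximal (P : FPoset) (x : Fin P.n) : ∃ m, ∀ y, ¬P.lt m y :=
  P.dual.exists_minimal x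

lemma exists_lt_cut_of_comparable_cut {A : Finset (Fin P.n)} (hA : A.Nonempty)
    (hA' : Aᶜ.Nonempty) (hcmp : ∀ x ∈ A, ∀ y ∉ A, P.comparabilityGraph.Adj x y) :
    ∃ S : Finset (Fin P.n), S.Nonempty ∧ Sᶜ.Nonempty ∧ ∀ x ∈ S, ∀ y ∉ S, P.lt x y := by
  classical
  have hopp : ∀ x y, (x ∈ A ↔ y ∉ A) → P.lt x y ∨ P.lt y x := by
    intro x y hxy
    by_cases hx : x ∈ A
    · exact hcmp x hx y (hxy.1 hx)
    · exact (hcmp y (not_not.1 (mt hxy.2 hx)) x hx).symm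
  refine ⟨univ.filter fun x => ∃ y, (x ∈ A ↔ y ∉ A) ∧ P.lt x y, ?_, ?_, ?_⟩
  · obtain ⟨m, hm⟩ := P.exists_minimal hA.choose
    obtain ⟨w, hw⟩ : ∃ w, (m ∈ A ↔ w ∉ A) := by
      by_cases hmA : m ∈ A
      · obtain ⟨w, hw⟩ := hA'
        exact ⟨w, by simp_all⟩
      · obtain ⟨w, hw⟩ := hA
        exact ⟨w, by simp_all⟩
    exact ⟨m, by simpa using ⟨w, hw, (hopp m w hw).resolve_right (hm w)⟩⟩
  · obtain ⟨M, hM⟩ := P.exists_maximal hA.choose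
    exact ⟨M, by simp [hM]⟩
  · simp only [mem_filter, mem_univ, true_and, not_exists, not_and]
    rintro x ⟨y, hxy, hlt⟩ z hz
    by_cases hxz : x ∈ A ↔ z ∉ A
    · exact (hopp x z hxz).resolve_right (hz x (by tauto))
    · exact P.lt_trans _ _ _ hlt ((hopp y z (by tauto)).resolve_right (hz y (by tauto)))

def restrict (P : FPoset) (S : Finset (Fin P.n)) : FPoset where
  n := #S
  lt a b := P.lt (S.orderEmbOfFin rfl a) (S.orderEmbOfFin rfl b)
  lt_irrefl _ := P.lt_irrefl _
  lt_trans _ _ _ := P.lt_trans _ _ _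

def incl (P : FPoset) (S : Finset (Fin P.n)) : Fin (P.restrict S).n → Fin P.n :=
  S.orderEmbOfFin rfl

lemma isEmb_incl (S : Finset (Fin P.n)) : IsEmb (P.restrict S) P (P.incl S) :=
  ⟨(S.orderEmbOfFin rfl).injective, fun _ _ => Iff.rfl⟩

lemma not_inducedSub_restrict (hN : ¬InducedSub Nposet P) (S : Finset (Fin P.n)) :
    ¬InducedSub Nposet (P.restrict S) :=
  fun h => hN (h.trans ⟨_, P.isEmb_incl S⟩)

lemma restrict_n_lt {S : Finset (Fin P.n)} (hS : Sᶜ.Nonempty) : (P.restrict S).n < P.n := by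
  obtain ⟨x, hx⟩ := hS
  show #S < P.n
  simpa using card_lt_univ_of_notMem (mem_compl.1 hx)

lemma exists_incl_eq_iff {S : Finset (Fin P.n)} {x : Fin P.n} :
    (∃ a, P.incl S a = x) ↔ x ∈ S :=
  Set.ext_iff.1 (S.range_orderEmbOfFin rfl) x

lemma exists_incl_lt_iff {S : Finset (Fin P.n)} {x y : Fin P.n} :
    (∃ a b, P.incl S a = x ∧ P.incl S b = y ∧ (P.restrict S).lt a b) ↔
      x ∈ S ∧ y ∈ S ∧ P.lt x y := by
  constructor
  · rintro ⟨a, b, rfl, rfl, h⟩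
    exact ⟨exists_incl_eq_iff.1 ⟨a, rfl⟩, exists_incl_eq_iff.1 ⟨b, rfl⟩, h⟩
  · rintro ⟨hx, hy, h⟩
    obtain ⟨a, rfl⟩ := exists_incl_eq_iff.2 hx
    obtain ⟨b, rfl⟩ := exists_incl_eq_iff.2 hy
    exact ⟨a, b, rfl, rfl, h⟩

lemma incl_ne_incl_compl (S : Finset (Fin P.n)) (a : Fin (P.restrict S).n)
    (b : Fin (P.restrict Sᶜ).n) : P.incl S a ≠ P.incl Sᶜ b := fun hab =>
  mem_compl.1 (exists_incl_eq_iff.1 ⟨b, hab.symm⟩) (exists_incl_eq_iff.1 ⟨a, rfl⟩)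

lemma isPar_restrict {S : Finset (Fin P.n)} (h : ∀ x ∈ S, ∀ y ∉ S, ¬P.comparabilityGraph.Adj x y) :
    IsPar (P.restrict S) (P.restrict Sᶜ) P := by
  refine ⟨P.incl S, P.incl Sᶜ, (P.isEmb_incl S).1, (P.isEmb_incl Sᶜ).1, fun x => ?_,
    incl_ne_incl_compl S, fun x y => ?_⟩
  · simpa only [exists_incl_eq_iff, mem_compl] using em _
  · simp only [exists_incl_lt_iff, mem_compl]
    by_cases hx : x ∈ S <;> by_cases hy : y ∈ S <;> simp [hx, hy]
    exacts [fun hxy => h x hx y hy (.inl hxy), fun hxy => h y hy x hx (.inr hxy)]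

lemma isSer_restrict {S : Finset (Fin P.n)} (h : ∀ x ∈ S, ∀ y ∉ S, P.lt x y) :
    IsSer (P.restrict S) (P.restrict Sᶜ) P := by
  refine ⟨P.incl S, P.incl Sᶜ, (P.isEmb_incl S).1, (P.isEmb_incl Sᶜ).1, fun x => ?_,
    incl_ne_incl_compl S, fun x y => ?_⟩
  · simpa only [exists_incl_eq_iff, mem_compl] using em _
  · simp only [exists_incl_lt_iff]
    simp only [exists_and_left, exists_and_right, exists_incl_eq_iff, mem_compl]
    by_cases hx : x ∈ S <;> by_cases hy : y ∈ S <;> simp [hx, hy, h]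
    exact fun hxy => P.lt_irrefl x (P.lt_trans _ _ _ hxy (h y hy x hx))

lemma exists_par_or_ser_cut (hN : ¬InducedSub Nposet P) (hn : 2 ≤ P.n) :
    ∃ S : Finset (Fin P.n), S.Nonempty ∧ Sᶜ.Nonempty ∧
      ((∀ x ∈ S, ∀ y ∉ S, ¬P.comparabilityGraph.Adj x y) ∨ ∀ x ∈ S, ∀ y ∉ S, P.lt x y) := by
  obtain ⟨A, ⟨-, hA, hA', hsep⟩ | ⟨-, hA, hA', hsep⟩⟩ :=
    P.comparabilityGraph.exists_isSeparation_or_compl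
      (fun a b c d h => hN (inducedSub_Nposet_of_isInducedP4 h)) univ (by simpa using hn)
  · simp only [← compl_eq_univ_sdiff, mem_compl] at hA' hsep
    exact ⟨A, hA, hA', .inl hsep⟩
  · simp only [← compl_eq_univ_sdiff, mem_compl, SimpleGraph.compl_adj, not_and, not_not]
      at hA' hsep
    obtain ⟨S, hS⟩ := exists_lt_cut_of_comparable_cut hA hA' fun x hx y hy =>
      hsep x hx y hy (fun h => hy (h ▸ hx))
    exact ⟨S, hS.1, hS.2.1, .inr hS.2.2⟩

theorem sp_of_not_inducedSub_Nposet (P : FPoset) (hN : ¬InducedSub Nposet P) : SP P := by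
  induction hn : P.n using Nat.strong_induction_on generalizing P with
  | _ n ih =>
  obtain hn2 | hn2 := lt_or_ge n 2
  · interval_cases n
    exacts [SP.empty P hn, SP.single P hn]
  obtain ⟨S, hS, hS', hcut⟩ := exists_par_or_ser_cut hN (hn ▸ hn2)
  have IH : ∀ T : Finset (Fin P.n), Tᶜ.Nonempty → SP (P.restrict T) := fun T hT =>
    ih _ (hn ▸ restrict_n_lt hT) _ (not_inducedSub_restrict hN T) rfl
  have hSc : Sᶜᶜ.Nonempty := by rwa [compl_compl]
  rcases hcut with hpar | hser
  · exact SP.par _ _ _ (IH S hS') (IH Sᶜ hSc) (isPar_restrict hpar)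
  · exact SP.ser _ _ _ (IH S hS') (IH Sᶜ hSc) (isSer_restrict hser)

end FPoset

open FPoset in
/-- A finite poset is series-parallel iff it does not contain `N` as an
induced subposet. -/
theorem sp_iff_N_free (P : FPoset) : SP P ↔ ¬ InducedSub Nposet P :=
  ⟨SP.not_inducedSub_Nposet, sp_of_not_inducedSub_Nposet P⟩
end

section
/- The gluing composition of iposets is well defined: if (s₁,P₁,t₁):n₁→m and (s₂,P₂,t₂):m→m₂ are iposets, then the quotient of P₁⊔P₂ identifying t₁(k) with s₂(k) for k∈[m], with order (p,i)<(q,j) iff (i=j and p<ᵢq) or (i<j and p∉t₁([m]) and q∉s₂([m])), is a partial order (irreflexive and transitive), and (s₁, P₁*P₂, t₂) is an iposet of type n₁→m₂. -/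
/-!
The gluing is realised on `Fin P.n ⊕ {b // b ∉ Set.range Q.s}`, each source `Q.s i` being sent
to the target `P.t i`. The glued relation is a strict order because the two pieces meet only
in points that are maximal in `P`, so a chain `x < y < z` can never pass from `Q` back to `P`.
-/

namespace Iposet

/-- `X` is the disjoint union of the carriers of `P` and `Q` with `P.t i` glued to `Q.s i`. -/
structure Amalgam (P Q : Iposet) (h : P.m = Q.k) (X : Type*) where
  f : Fin P.n → X
  g : Fin Q.n → X
  f_inj : Function.Injective f
  g_inj : Function.Injective g
  cover : ∀ x, (∃ a, f a = x) ∨ (∃ b, g b = x)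
  agree : ∀ i : Fin P.m, f (P.t i) = g (Q.s (Fin.cast h i))
  overlap : ∀ a b, f a = g b → ∃ i, a = P.t i

namespace Amalgam

variable {P Q : Iposet} {h : P.m = Q.k} {X Y : Type*} (E : Amalgam P Q h X)

def Lt (x y : X) : Prop :=
  (∃ a b, E.f a = x ∧ E.f b = y ∧ P.lt a b) ∨
  (∃ a b, E.g a = x ∧ E.g b = y ∧ Q.lt a b) ∨
  (∃ a b, E.f a = x ∧ E.g b = y ∧ (∀ i, a ≠ P.t i) ∧ (∀ j, b ≠ Q.s j))

theorem not_lt_of_f_eq_g {a : Fin P.n} {b : Fin Q.n} (hab : E.f a = E.g b) (c : Fin P.n) :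
    ¬ P.lt a c := by
  obtain ⟨i, rfl⟩ := E.overlap a b hab
  exact P.t_max i c

theorem lt_irrefl (x : X) : ¬ E.Lt x x := by
  rintro (⟨a, b, rfl, hb, hab⟩ | ⟨a, b, rfl, hb, hab⟩ | ⟨a, b, rfl, hb, ha, -⟩)
  · exact P.lt_irrefl a (E.f_inj hb ▸ hab)
  · exact Q.lt_irrefl a (E.g_inj hb ▸ hab)
  · obtain ⟨i, hi⟩ := E.overlap a b hb.symm
    exact ha i hi

theorem lt_trans (x y z : X) : E.Lt x y → E.Lt y z → E.Lt x z := by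
  rintro (⟨a, b, rfl, rfl, hab⟩ | ⟨a, b, rfl, rfl, hab⟩ | ⟨a, b, rfl, rfl, ha, hb⟩) <;>
    rintro (⟨c, d, hc, rfl, hcd⟩ | ⟨c, d, hc, rfl, hcd⟩ | ⟨c, d, hc, rfl, hc', hd⟩)
  · exact Or.inl ⟨a, d, rfl, rfl, P.lt_trans _ _ _ hab (E.f_inj hc ▸ hcd)⟩
  · refine Or.inr <| Or.inr ⟨a, d, rfl, rfl, ?_, ?_⟩
    · rintro i rfl; exact P.t_max i b hab
    · rintro j rfl; exact Q.s_min j c hcd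
  · refine Or.inr <| Or.inr ⟨a, d, rfl, rfl, ?_, hd⟩
    rintro i rfl; exact P.t_max i b hab
  · exact absurd hcd (E.not_lt_of_f_eq_g hc _)
  · exact Or.inr <| Or.inl ⟨a, d, rfl, rfl, Q.lt_trans _ _ _ hab (E.g_inj hc ▸ hcd)⟩
  · obtain ⟨i, rfl⟩ := E.overlap c b hc
    exact absurd rfl (hc' i)
  · exact absurd hcd (E.not_lt_of_f_eq_g hc _)
  · refine Or.inr <| Or.inr ⟨a, d, rfl, rfl, ha, ?_⟩
    rintro j rfl; exact Q.s_min j c hcd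
  · obtain ⟨i, rfl⟩ := E.overlap c b hc
    exact absurd rfl (hc' i)

theorem exists_eq_s_of_g_eq_f {a : Fin P.n} {b : Fin Q.n} (hab : E.g b = E.f a) :
    ∃ j, b = Q.s j := by
  obtain ⟨i, rfl⟩ := E.overlap a b hab.symm
  exact ⟨_, E.g_inj (hab.trans (E.agree i))⟩

theorem not_lt_f_s (i : Fin P.k) (x : X) : ¬ E.Lt x (E.f (P.s i)) := by
  rintro (⟨a, b, rfl, hb, hab⟩ | ⟨a, b, rfl, hb, hab⟩ | ⟨a, b, rfl, hb, -, hb'⟩)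
  · exact P.s_min i a (E.f_inj hb ▸ hab)
  · obtain ⟨j, rfl⟩ := E.exists_eq_s_of_g_eq_f hb
    exact Q.s_min j a hab
  · obtain ⟨j, rfl⟩ := E.exists_eq_s_of_g_eq_f hb
    exact hb' j rfl

theorem not_g_t_lt (i : Fin Q.m) (x : X) : ¬ E.Lt (E.g (Q.t i)) x := by
  rintro (⟨a, b, ha, rfl, hab⟩ | ⟨a, b, ha, rfl, hab⟩ | ⟨a, b, ha, rfl, ha', -⟩)
  · exact E.not_lt_of_f_eq_g ha b hab
  · exact Q.t_max i b (E.g_inj ha ▸ hab)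
  · obtain ⟨j, rfl⟩ := E.overlap a _ ha
    exact ha' j rfl

def congr (e : X ≃ Y) : Amalgam P Q h Y where
  f := e ∘ E.f
  g := e ∘ E.g
  f_inj := e.injective.comp E.f_inj
  g_inj := e.injective.comp E.g_inj
  cover y := by
    rcases E.cover (e.symm y) with ⟨a, ha⟩ | ⟨b, hb⟩
    · exact Or.inl ⟨a, by simp [ha]⟩
    · exact Or.inr ⟨b, by simp [hb]⟩
  agree i := congrArg e (E.agree i)
  overlap a b hab := E.overlap a b (e.injective hab)

def toIposet {N : ℕ} (E : Amalgam P Q h (Fin N)) : Iposet where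
  n := N
  lt := E.Lt
  lt_irrefl := E.lt_irrefl
  lt_trans := E.lt_trans
  k := P.k
  m := Q.m
  s := E.f ∘ P.s
  t := E.g ∘ Q.t
  s_inj := E.f_inj.comp P.s_inj
  t_inj := E.g_inj.comp Q.t_inj
  s_min := E.not_lt_f_s
  t_max := E.not_g_t_lt

theorem isGluing_toIposet {N : ℕ} (E : Amalgam P Q h (Fin N)) : IsGluing P Q E.toIposet :=
  ⟨{ hg := h, hk := rfl, hm := rfl, f := E.f, g := E.g, f_inj := E.f_inj, g_inj := E.g_inj,
     cover := E.cover, agree := E.agree, overlap := E.overlap, order := fun _ _ => Iff.rfl,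
     s_eq := fun _ => rfl, t_eq := fun _ => rfl }⟩

noncomputable def sumG (h : P.m = Q.k) (b : Fin Q.n) : Fin P.n ⊕ {b // b ∉ Set.range Q.s} :=
  if hb : b ∈ Set.range Q.s then
    .inl (P.t (Fin.cast h.symm ((Equiv.ofInjective Q.s Q.s_inj).symm ⟨b, hb⟩)))
  else .inr ⟨b, hb⟩

theorem sumG_s (j : Fin Q.k) : sumG h (Q.s j) = .inl (P.t (Fin.cast h.symm j)) := by
  rw [sumG, dif_pos ⟨j, rfl⟩, Equiv.ofInjective_symm_apply]

theorem sumG_of_notMem {b : Fin Q.n} (hb : b ∉ Set.range Q.s) : sumG h b = .inr ⟨b, hb⟩ :=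
  dif_neg hb

noncomputable def sum (h : P.m = Q.k) : Amalgam P Q h (Fin P.n ⊕ {b // b ∉ Set.range Q.s}) where
  f := .inl
  g := sumG h
  f_inj := Sum.inl_injective
  g_inj b b' hbb' := by
    by_cases hb : b ∈ Set.range Q.s <;> by_cases hb' : b' ∈ Set.range Q.s
    · obtain ⟨j, rfl⟩ := hb
      obtain ⟨j', rfl⟩ := hb'
      exact congrArg Q.s (by simpa [sumG_s, P.t_inj.eq_iff] using hbb')
    · obtain ⟨j, rfl⟩ := hb
      simp [sumG_s, sumG_of_notMem hb'] at hbb'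
    · obtain ⟨j', rfl⟩ := hb'
      simp [sumG_s, sumG_of_notMem hb] at hbb'
    · simpa [sumG_of_notMem hb, sumG_of_notMem hb'] using hbb'
  cover
    | .inl a => Or.inl ⟨a, rfl⟩
    | .inr ⟨b, hb⟩ => Or.inr ⟨b, sumG_of_notMem hb⟩
  agree i := by simp [sumG_s]
  overlap a b hab := by
    by_cases hb : b ∈ Set.range Q.s
    · obtain ⟨j, rfl⟩ := hb
      rw [sumG_s] at hab
      exact ⟨_, Sum.inl_injective hab⟩
    · simp [sumG_of_notMem hb] at hab

theorem card_sum_add (P Q : Iposet) :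
    Fintype.card (Fin P.n ⊕ {b // b ∉ Set.range Q.s}) + Q.k = P.n + Q.n := by
  have hk : Q.k ≤ Q.n := by simpa using Fintype.card_le_of_injective Q.s Q.s_inj
  rw [Fintype.card_sum, Fintype.card_fin, Fintype.card_subtype_compl,
    Set.card_range_of_injective Q.s_inj]
  simp only [Fintype.card_fin]
  omega

end Amalgam
end Iposet

open Iposet in
/-- The gluing composition of iposets is well defined: for iposets
`P : n₁ → m` and `Q : m → m₂` there exists an iposet `R` (in particular, the
glued order is irreflexive and transitive and the interface maps are
injective into minimal resp. maximal elements) which is the gluing `P * Q`;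
it has type `n₁ → m₂` and `P.n + Q.n - m` points. -/
theorem gluing_well_defined (P Q : Iposet) (h : P.m = Q.k) :
    ∃ R : Iposet, IsGluing P Q R ∧ R.k = P.k ∧ R.m = Q.m ∧
      R.n + P.m = P.n + Q.n := by
  let E := (Amalgam.sum h).congr (Fintype.equivFin _)
  refine ⟨E.toIposet, E.isGluing_toIposet, rfl, rfl, ?_⟩
  rw [h]
  exact Amalgam.card_sum_add P Q
end

section
/- Gluing and parallel compositions of interface-consistent iposets are interface consistent; consequently every gluing-parallel iposet is interface consistent. -/
/-!
Interface consistency says that the partial bijection between source and target indices, given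
by the points lying in both interfaces, is order preserving. For a gluing `P * Q` this bijection
is the composite of those of `P` and `Q`, since a point in both interfaces of `P * Q` passes
through the glued interface; for a parallel composition it is their block sum. Both operations
preserve order, iposets with at most one point are trivially consistent, and induction on `GP`
finishes the proof.
-/

theorem Fin.exists_eq_cast_castAdd_or_natAdd {r p q : ℕ} (h : r = p + q) (i : Fin r) :
    (∃ a : Fin p, i = Fin.cast h.symm (Fin.castAdd q a)) ∨
      ∃ b : Fin q, i = Fin.cast h.symm (Fin.natAdd p b) := by
  subst h
  exact Fin.addCases (fun a => Or.inl ⟨a, rfl⟩) (fun b => Or.inr ⟨b, rfl⟩) i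

namespace Iposet

theorem interfaceConsistent_of_n_le_one {P : Iposet} (hn : P.n ≤ 1) : InterfaceConsistent P := by
  have : Subsingleton (Fin P.n) := Fin.subsingleton_iff_le_one.mpr hn
  intro i j i' j' _ _
  obtain rfl : i = j := P.s_inj (Subsingleton.elim _ _)
  obtain rfl : i' = j' := P.t_inj (Subsingleton.elim _ _)
  simp only [lt_self_iff_false]

variable {P Q R : Iposet}

theorem GluingData.exists_of_s_eq_t (d : GluingData P Q R) {i : Fin R.k} {i' : Fin R.m}
    (h : R.s i = R.t i') :
    ∃ l : Fin P.m, P.s (Fin.cast d.hk i) = P.t l ∧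
      Q.s (Fin.cast d.hg l) = Q.t (Fin.cast d.hm i') := by
  rw [d.s_eq, d.t_eq] at h
  obtain ⟨l, hl⟩ := d.overlap _ _ h
  exact ⟨l, hl, d.g_inj (by rw [← d.agree, ← hl, h])⟩

theorem GluingData.interfaceConsistent (d : GluingData P Q R) (hP : InterfaceConsistent P)
    (hQ : InterfaceConsistent Q) : InterfaceConsistent R := by
  intro i j i' j' hi hj
  obtain ⟨l, hPi, hQi⟩ := d.exists_of_s_eq_t hi
  obtain ⟨l', hPj, hQj⟩ := d.exists_of_s_eq_t hj
  exact (hP _ _ _ _ hPi hPj).trans (hQ _ _ _ _ hQi hQj)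

theorem ParData.s_eq_t_cases (d : ParData P Q R) {i : Fin R.k} {i' : Fin R.m}
    (h : R.s i = R.t i') :
    (∃ a a', P.s a = P.t a' ∧ (i : ℕ) = a ∧ (i' : ℕ) = a') ∨
      ∃ b b', Q.s b = Q.t b' ∧ (i : ℕ) = P.k + b ∧ (i' : ℕ) = P.m + b' := by
  rcases Fin.exists_eq_cast_castAdd_or_natAdd d.hk i with ⟨a, rfl⟩ | ⟨b, rfl⟩ <;>
    rcases Fin.exists_eq_cast_castAdd_or_natAdd d.hm i' with ⟨a', rfl⟩ | ⟨b', rfl⟩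
  · rw [d.s_eq₁, d.t_eq₁] at h
    exact Or.inl ⟨a, a', d.f_inj h, rfl, rfl⟩
  · rw [d.s_eq₁, d.t_eq₂] at h
    exact absurd h (d.disjoint _ _)
  · rw [d.s_eq₂, d.t_eq₁] at h
    exact absurd h.symm (d.disjoint _ _)
  · rw [d.s_eq₂, d.t_eq₂] at h
    exact Or.inr ⟨b, b', d.g_inj h, rfl, rfl⟩

theorem ParData.interfaceConsistent (d : ParData P Q R) (hP : InterfaceConsistent P)
    (hQ : InterfaceConsistent Q) : InterfaceConsistent R := by
  intro i j i' j' hi hj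
  rcases d.s_eq_t_cases hi with ⟨a, a', ha, hi, hi'⟩ | ⟨b, b', hb, hi, hi'⟩ <;>
    rcases d.s_eq_t_cases hj with ⟨c, c', hc, hj, hj'⟩ | ⟨e, e', he, hj, hj'⟩ <;>
    rw [hi, hi', hj, hj']
  · exact hP a c a' c' ha hc
  · omega
  · omega
  · simpa only [Nat.add_lt_add_iff_left] using hQ b e b' e' hb he

theorem GP.interfaceConsistent (h : GP P) : InterfaceConsistent P := by
  induction h with
  | empty P hn => exact interfaceConsistent_of_n_le_one (by omega)
  | single P hn => exact interfaceConsistent_of_n_le_one hn.le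
  | glue P Q R _ _ hR ihP ihQ => exact hR.some.interfaceConsistent ihP ihQ
  | par P Q R _ _ hR ihP ihQ => exact hR.some.interfaceConsistent ihP ihQ

end Iposet

open Iposet in
/-- Gluing and parallel compositions of interface-consistent iposets are
interface consistent; consequently every gluing-parallel iposet is
interface consistent. -/
theorem gp_interface_consistent :
    (∀ P Q R : Iposet, InterfaceConsistent P → InterfaceConsistent Q →
        IsGluing P Q R → InterfaceConsistent R) ∧
    (∀ P Q R : Iposet, InterfaceConsistent P → InterfaceConsistent Q →
        IsPar P Q R → InterfaceConsistent R) ∧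
    (∀ P : Iposet, GP P → InterfaceConsistent P) :=
  ⟨fun _ _ _ hP hQ ⟨d⟩ => d.interfaceConsistent hP hQ,
    fun _ _ _ hP hQ ⟨d⟩ => d.interfaceConsistent hP hQ,
    fun _ h => h.interfaceConsistent⟩
end

section
/- A gluing composition P = P₁*P₂ of iposets is trivial (i.e., the underlying poset of P equals that of P₁ or of P₂) if and only if P₁ is a starter or P₂ is a terminator. -/
open Function

/-!
Gluing `P * Q` has `|P| + |Q| − m` points, so its underlying poset can only be that of `P` if all
points of `Q` are source points, and only be that of `Q` if all points of `P` are target points.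
A surjective source (target) map forces discreteness, so these are exactly the terminators
(starters). Conversely, when `Q` is a terminator the copy of `P` exhausts `P * Q` and no relation
from `P` to a non-interface point of `Q` is added, so the embedding of `P` is a poset isomorphism;
symmetrically when `P` is a starter.
-/

namespace Iposet

section

variable (P : Iposet)

theorem discrete_of_surjective_t (h : Surjective P.t) : Discrete P := by
  intro x y hxy
  obtain ⟨i, rfl⟩ := h x
  exact P.t_max i y hxy

theorem discrete_of_surjective_s (h : Surjective P.s) : Discrete P := by
  intro x y hxy
  obtain ⟨i, rfl⟩ := h y
  exact P.s_min i x hxy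

theorem starter_iff_surjective_t : Starter P ↔ Surjective P.t :=
  ⟨fun h => h.2.2, fun h => ⟨P.discrete_of_surjective_t h, P.t_inj, h⟩⟩

theorem terminator_iff_surjective_s : Terminator P ↔ Surjective P.s :=
  ⟨fun h => h.2.2, fun h => ⟨P.discrete_of_surjective_s h, P.s_inj, h⟩⟩

theorem surjective_t_iff_m_eq_n : Surjective P.t ↔ P.m = P.n := by
  simpa [Bijective, P.t_inj] using Fintype.bijective_iff_injective_and_card P.t

theorem surjective_s_iff_k_eq_n : Surjective P.s ↔ P.k = P.n := by
  simpa [Bijective, P.s_inj] using Fintype.bijective_iff_injective_and_card P.s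

theorem PosetIso.n_eq {P Q : Iposet} (h : PosetIso P Q) : P.n = Q.n :=
  Fin.equiv_iff_eq.mp ⟨h.choose⟩

theorem posetIso_of_bijective {P Q : Iposet} {e : Fin Q.n → Fin P.n} (he : Bijective e)
    (hlt : ∀ a b, P.lt (e a) (e b) ↔ Q.lt a b) : PosetIso P Q := by
  refine ⟨(Equiv.ofBijective e he).symm, fun x y => ?_⟩
  obtain ⟨a, rfl⟩ := he.2 x
  obtain ⟨b, rfl⟩ := he.2 y
  simp only [Equiv.ofBijective_symm_apply_apply, hlt]

end

namespace GluingData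

variable {P Q R : Iposet}

theorem n_add_m (d : GluingData P Q R) : R.n + P.m = P.n + Q.n := by
  classical
  have hunion : Finset.univ.image d.f ∪ Finset.univ.image d.g = Finset.univ :=
    Finset.eq_univ_iff_forall.2 fun x => by
      rcases d.cover x with ⟨a, rfl⟩ | ⟨b, rfl⟩ <;> simp
  have hinter : Finset.univ.image d.f ∩ Finset.univ.image d.g
      = Finset.univ.image (d.f ∘ P.t) := by
    ext x
    simp only [Finset.mem_inter, Finset.mem_image, Finset.mem_univ, true_and, comp_apply]
    constructor
    · rintro ⟨⟨a, rfl⟩, ⟨b, hb⟩⟩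
      obtain ⟨i, rfl⟩ := d.overlap a b hb.symm
      exact ⟨i, rfl⟩
    · rintro ⟨i, rfl⟩
      exact ⟨⟨P.t i, rfl⟩, ⟨Q.s (Fin.cast d.hg i), (d.agree i).symm⟩⟩
  have hcard := Finset.card_union_add_card_inter (Finset.univ.image d.f) (Finset.univ.image d.g)
  rw [hunion, hinter, Finset.card_image_of_injective _ d.f_inj,
    Finset.card_image_of_injective _ d.g_inj,
    Finset.card_image_of_injective _ (d.f_inj.comp P.t_inj)] at hcard
  simpa using hcard

theorem surjective_g (d : GluingData P Q R) (hP : Surjective P.t) : Surjective d.g := by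
  intro x
  rcases d.cover x with ⟨a, rfl⟩ | ⟨b, rfl⟩
  · obtain ⟨i, rfl⟩ := hP a
    exact ⟨_, (d.agree i).symm⟩
  · exact ⟨b, rfl⟩

theorem surjective_f (d : GluingData P Q R) (hQ : Surjective Q.s) : Surjective d.f := by
  intro x
  rcases d.cover x with ⟨a, rfl⟩ | ⟨b, rfl⟩
  · exact ⟨a, rfl⟩
  · obtain ⟨j, rfl⟩ := hQ b
    exact ⟨P.t (Fin.cast d.hg.symm j), by simp [d.agree]⟩

theorem lt_g_iff (d : GluingData P Q R) (hP : Surjective P.t) (a b : Fin Q.n) :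
    R.lt (d.g a) (d.g b) ↔ Q.lt a b := by
  rw [d.order]
  constructor
  · rintro (⟨a', b', -, -, hlt⟩ | ⟨a', b', ha, hb, hlt⟩ | ⟨a', -, -, -, hnt, -⟩)
    · exact absurd hlt (P.discrete_of_surjective_t hP a' b')
    · rwa [← d.g_inj ha, ← d.g_inj hb]
    · obtain ⟨i, rfl⟩ := hP a'
      exact absurd rfl (hnt i)
  · exact fun hlt => Or.inr (Or.inl ⟨a, b, rfl, rfl, hlt⟩)

theorem lt_f_iff (d : GluingData P Q R) (hQ : Surjective Q.s) (a b : Fin P.n) :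
    R.lt (d.f a) (d.f b) ↔ P.lt a b := by
  rw [d.order]
  constructor
  · rintro (⟨a', b', ha, hb, hlt⟩ | ⟨a', b', -, -, hlt⟩ | ⟨-, b', -, -, -, hns⟩)
    · rwa [← d.f_inj ha, ← d.f_inj hb]
    · exact absurd hlt (Q.discrete_of_surjective_s hQ a' b')
    · obtain ⟨j, rfl⟩ := hQ b'
      exact absurd rfl (hns j)
  · exact fun hlt => Or.inl ⟨a, b, rfl, rfl, hlt⟩

theorem posetIso_right (d : GluingData P Q R) (hP : Surjective P.t) : PosetIso R Q :=
  posetIso_of_bijective ⟨d.g_inj, d.surjective_g hP⟩ (d.lt_g_iff hP)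

theorem posetIso_left (d : GluingData P Q R) (hQ : Surjective Q.s) : PosetIso R P :=
  posetIso_of_bijective ⟨d.f_inj, d.surjective_f hQ⟩ (d.lt_f_iff hQ)

end GluingData

end Iposet

open Iposet in
/-- A gluing composition `R = P * Q` is trivial (its underlying poset is
that of `P` or that of `Q`) if and only if `P` is a starter or `Q` is a
terminator. -/
theorem gluing_trivial_iff (P Q R : Iposet) (h : IsGluing P Q R) :
    (PosetIso R P ∨ PosetIso R Q) ↔ (Starter P ∨ Terminator Q) := by
  obtain ⟨d⟩ := h
  rw [starter_iff_surjective_t, terminator_iff_surjective_s]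
  constructor
  · rw [surjective_t_iff_m_eq_n, surjective_s_iff_k_eq_n, ← d.hg]
    have hcard := d.n_add_m
    rintro (hRP | hRQ)
    · have := hRP.n_eq
      omega
    · have := hRQ.n_eq
      omega
  · rintro (hP | hQ)
    · exact Or.inr (d.posetIso_right hP)
    · exact Or.inl (d.posetIso_left hQ)
end

section
/- Let P = P₁*P₂ be a nontrivial gluing of iposets. Then the minimal elements of P are exactly (the images of) the minimal elements of P₁, and the maximal elements of P are exactly (the images of) the maximal elements of P₂. Consequently, P is left Winkowski iff P₁ is, P is right Winkowski iff P₂ is, and P is Winkowski iff P₁ is left Winkowski and P₂ is right Winkowski. -/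
/-!
A point of `R` coming from `P` is minimal in `R` iff it is minimal in `P`, since it can be
identified with a point of `Q` only in the source interface of `Q`, which consists of minimal
points. A point of `Q` outside its source interface lies above every point of `P` outside its
target interface, and such a point exists because `P` is not a starter; so it is not minimal.
The statements about maximal elements are the dual ones: reversing all orders turns the gluing
`P * Q` into `Qᵒᵖ * Pᵒᵖ`.
-/

namespace Iposet

def dual (P : Iposet) : Iposet where
  n := P.n
  lt x y := P.lt y x
  lt_irrefl := P.lt_irrefl
  lt_trans x y z hxy hyz := P.lt_trans z y x hyz hxy
  k := P.m
  m := P.k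
  s := P.t
  t := P.s
  s_inj := P.t_inj
  t_inj := P.s_inj
  s_min := P.t_max
  t_max := P.s_min

theorem starter_dual {P : Iposet} : Starter P.dual ↔ Terminator P :=
  and_congr_left' ⟨fun h x y => h y x, fun h x y => h y x⟩

theorem exists_ne_t_of_not_starter {P : Iposet} (hP : ¬ Starter P) : ∃ a, ∀ i, a ≠ P.t i := by
  by_contra! h
  refine hP ⟨fun x y hxy => ?_, P.t_inj, fun x => (h x).imp fun _ => Eq.symm⟩
  obtain ⟨i, rfl⟩ := h x
  exact P.t_max i y hxy

namespace GluingData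

variable {P Q R : Iposet} (D : GluingData P Q R)

theorem lt_f_f {a b : Fin P.n} (h : P.lt a b) : R.lt (D.f a) (D.f b) :=
  (D.order _ _).2 (Or.inl ⟨a, b, rfl, rfl, h⟩)

theorem lt_f_g {a : Fin P.n} {b : Fin Q.n} (ha : ∀ i, a ≠ P.t i) (hb : ∀ j, b ≠ Q.s j) :
    R.lt (D.f a) (D.g b) :=
  (D.order _ _).2 (Or.inr (Or.inr ⟨a, b, rfl, rfl, ha, hb⟩))

theorem g_s_eq_f_t (j : Fin Q.k) : D.g (Q.s j) = D.f (P.t (Fin.cast D.hg.symm j)) := by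
  rw [D.agree, Fin.cast_cast, Fin.cast_eq_self]

theorem exists_t_of_f_eq_g {a : Fin P.n} {b : Fin Q.n} (h : D.f a = D.g b) :
    ∃ i, a = P.t i ∧ b = Q.s (Fin.cast D.hg i) := by
  obtain ⟨i, rfl⟩ := D.overlap a b h
  exact ⟨i, rfl, D.g_inj (by rw [← h, D.agree])⟩

theorem exists_s_eq_f_iff {a : Fin P.n} : (∃ i, R.s i = D.f a) ↔ ∃ i, P.s i = a := by
  simp only [D.s_eq, D.f_inj.eq_iff]
  exact ⟨fun ⟨i, h⟩ => ⟨_, h⟩, fun ⟨i, h⟩ => ⟨Fin.cast D.hk.symm i, by simpa using h⟩⟩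

def dual : GluingData Q.dual P.dual R.dual where
  hg := D.hg.symm
  hk := D.hm
  hm := D.hk
  f := D.g
  g := D.f
  f_inj := D.g_inj
  g_inj := D.f_inj
  cover x := (D.cover x).symm
  agree := D.g_s_eq_f_t
  overlap b a h := by
    obtain ⟨i, -, rfl⟩ := D.exists_t_of_f_eq_g h.symm
    exact ⟨_, rfl⟩
  order x y := by
    refine (D.order y x).trans ⟨?_, ?_⟩
    · rintro (⟨a, b, ha, hb, h⟩ | ⟨a, b, ha, hb, h⟩ | ⟨a, b, ha, hb, h⟩)
      exacts [Or.inr (Or.inl ⟨b, a, hb, ha, h⟩), Or.inl ⟨b, a, hb, ha, h⟩,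
        Or.inr (Or.inr ⟨b, a, hb, ha, h.symm⟩)]
    · rintro (⟨a, b, ha, hb, h⟩ | ⟨a, b, ha, hb, h⟩ | ⟨a, b, ha, hb, h⟩)
      exacts [Or.inr (Or.inl ⟨b, a, hb, ha, h⟩), Or.inl ⟨b, a, hb, ha, h⟩,
        Or.inr (Or.inr ⟨b, a, hb, ha, h.symm⟩)]
  s_eq := D.t_eq
  t_eq := D.s_eq

theorem isMinEl_f_iff {a : Fin P.n} : IsMinEl R (D.f a) ↔ IsMinEl P a := by
  refine ⟨fun h a' ha' => h _ (D.lt_f_f ha'), fun ha y hy => ?_⟩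
  rcases (D.order y (D.f a)).1 hy with
    ⟨a', b, -, hb, hlt⟩ | ⟨a', b, -, hb, hlt⟩ | ⟨a', b, -, hb, -, hs⟩
  · exact ha a' (D.f_inj hb ▸ hlt)
  · obtain ⟨i, -, rfl⟩ := D.exists_t_of_f_eq_g hb.symm
    exact Q.s_min _ _ hlt
  · obtain ⟨i, -, rfl⟩ := D.exists_t_of_f_eq_g hb.symm
    exact hs _ rfl

theorem exists_f_eq_of_isMinEl (hP : ¬ Starter P) {x : Fin R.n} (hx : IsMinEl R x) :
    ∃ a, D.f a = x := by
  obtain ⟨a₀, ha₀⟩ := exists_ne_t_of_not_starter hP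
  rcases D.cover x with h | ⟨b, rfl⟩
  · exact h
  by_cases hb : ∃ j, b = Q.s j
  · obtain ⟨j, rfl⟩ := hb
    exact ⟨_, (D.g_s_eq_f_t j).symm⟩
  · push Not at hb
    exact (hx _ (D.lt_f_g ha₀ hb)).elim

theorem isMinEl_iff (hP : ¬ Starter P) (x : Fin R.n) :
    IsMinEl R x ↔ ∃ a, IsMinEl P a ∧ D.f a = x := by
  refine ⟨fun hx => ?_, fun ⟨a, ha, hax⟩ => hax ▸ D.isMinEl_f_iff.2 ha⟩
  obtain ⟨a, rfl⟩ := D.exists_f_eq_of_isMinEl hP hx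
  exact ⟨a, D.isMinEl_f_iff.1 hx, rfl⟩

theorem leftWink_iff (D : GluingData P Q R) (hP : ¬ Starter P) : LeftWink R ↔ LeftWink P := by
  refine ⟨fun hR a => ?_, fun hP' x => ⟨fun hx => ?_, ?_⟩⟩
  · rw [← D.isMinEl_f_iff, hR, D.exists_s_eq_f_iff]
  · obtain ⟨a, ha, rfl⟩ := (D.isMinEl_iff hP x).1 hx
    exact D.exists_s_eq_f_iff.2 ((hP' a).1 ha)
  · rintro ⟨i, rfl⟩
    exact R.s_min i

end GluingData

end Iposet

open Iposet in
/-- For a nontrivial gluing `R = P * Q` (exhibited by the data `Dt`), the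
minimal elements of `R` are exactly the images of the minimal elements of
`P`, and the maximal elements of `R` are exactly the images of the maximal
elements of `Q`.  Consequently `R` is left Winkowski iff `P` is, right
Winkowski iff `Q` is, and Winkowski iff `P` is left Winkowski and `Q` is
right Winkowski. -/
theorem gluing_winkowski (P Q R : Iposet) (Dt : GluingData P Q R)
    (hP : ¬ Starter P) (hQ : ¬ Terminator Q) :
    (∀ x, IsMinEl R x ↔ ∃ a, IsMinEl P a ∧ Dt.f a = x) ∧
    (∀ x, IsMaxEl R x ↔ ∃ b, IsMaxEl Q b ∧ Dt.g b = x) ∧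
    (LeftWink R ↔ LeftWink P) ∧
    (RightWink R ↔ RightWink Q) ∧
    (Wink R ↔ (LeftWink P ∧ RightWink Q)) := by
  have hQ' : ¬ Starter Q.dual := mt starter_dual.1 hQ
  have hleft : LeftWink R ↔ LeftWink P := Dt.leftWink_iff hP
  have hright : RightWink R ↔ RightWink Q := Dt.dual.leftWink_iff hQ'
  exact ⟨Dt.isMinEl_iff hP, Dt.dual.isMinEl_iff hQ', hleft, hright, and_congr hleft hright⟩
end

section
/- Every discrete iposet D can be written as a gluing D = σ*Q = R*τ where σ, τ are symmetries and Q, R are interface-consistent discrete iposets. -/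
section Matching

variable {α β : Type*} [LinearOrder α] [LinearOrder β]

theorem lt_iff_lt_of_monotone_matching (r : α → β → Prop)
    (hfun : ∀ a b b', r a b → r a b' → b = b')
    (hmono : ∀ a a' b b', r a b → r a' b' → a < a' → b < b')
    {a a' : α} {b b' : β} (hb : r a b) (hb' : r a' b') : a < a' ↔ b < b' := by
  refine ⟨hmono a a' b b' hb hb', fun hlt => ?_⟩
  rcases lt_trichotomy a a' with h | rfl | h
  · exact h
  · exact absurd (hfun a b b' hb hb') hlt.ne
  · exact absurd (hmono a' a b' b hb' hb h) hlt.asymm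

theorem Fin.exists_perm_monotone_matching {k : ℕ} (r : Fin k → β → Prop)
    (hfun : ∀ a b b', r a b → r a b' → b = b')
    (hinj : ∀ a a' b, r a b → r a' b → a = a') :
    ∃ π : Equiv.Perm (Fin k), ∀ i j b b', r (π i) b → r (π j) b' → i < j → b < b' := by
  classical
  let key : Fin k → WithBot β := fun a => if h : ∃ b, r a b then h.choose else ⊥
  have key_eq : ∀ a b, r a b → key a = b := fun a b hab => by
    have hex : ∃ b, r a b := ⟨b, hab⟩
    simp only [key, dif_pos hex, hfun a _ _ hex.choose_spec hab]
  refine ⟨Tuple.sort key, fun i j b b' hb hb' hij => ?_⟩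
  have hle : key (Tuple.sort key i) ≤ key (Tuple.sort key j) := Tuple.monotone_sort key hij.le
  rw [key_eq _ _ hb, key_eq _ _ hb', WithBot.coe_le_coe] at hle
  refine hle.lt_of_ne fun hbb' => hij.ne ((Tuple.sort key).injective ?_)
  exact hinj _ _ b hb (hbb' ▸ hb')

end Matching

namespace Iposet

def ofPerms {k : ℕ} (σ τ : Equiv.Perm (Fin k)) : Iposet where
  n := k
  lt _ _ := False
  lt_irrefl _ := id
  lt_trans _ _ _ h _ := h
  k := k
  m := k
  s := σ
  t := τ
  s_inj := σ.injective
  t_inj := τ.injective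
  s_min _ _ := id
  t_max _ _ := id

theorem symmetry_ofPerms {k : ℕ} (σ τ : Equiv.Perm (Fin k)) : Symmetry (ofPerms σ τ) :=
  ⟨fun _ _ => id, σ.bijective, τ.bijective⟩

def relabelSource (D : Iposet) (π : Equiv.Perm (Fin D.k)) : Iposet :=
  { D with s := D.s ∘ π, s_inj := D.s_inj.comp π.injective, s_min := fun i => D.s_min (π i) }

def relabelTarget (D : Iposet) (π : Equiv.Perm (Fin D.m)) : Iposet :=
  { D with t := D.t ∘ π, t_inj := D.t_inj.comp π.injective, t_max := fun i => D.t_max (π i) }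

theorem isGluing_ofPerms_relabelSource (D : Iposet) (π : Equiv.Perm (Fin D.k)) :
    IsGluing (ofPerms 1 π) (D.relabelSource π) D := by
  refine ⟨⟨rfl, rfl, rfl, D.s, id, D.s_inj, fun _ _ => id, fun x => Or.inr ⟨x, rfl⟩,
    fun _ => rfl, fun a _ _ => ⟨π.symm a, (π.apply_symm_apply a).symm⟩,
    fun x y => ⟨fun hxy => Or.inr (Or.inl ⟨x, y, rfl, rfl, hxy⟩), ?_⟩,
    fun _ => rfl, fun _ => rfl⟩⟩
  rintro (⟨_, _, _, _, hab⟩ | ⟨a, b, rfl, rfl, hab⟩ | ⟨a, _, _, _, ha, _⟩)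
  · exact hab.elim
  · exact hab
  · exact absurd (π.apply_symm_apply a).symm (ha (π.symm a))

theorem isGluing_relabelTarget_ofPerms (D : Iposet) (π : Equiv.Perm (Fin D.m)) :
    IsGluing (D.relabelTarget π) (ofPerms π 1) D := by
  refine ⟨⟨rfl, rfl, rfl, id, D.t, fun _ _ => id, D.t_inj, fun x => Or.inl ⟨x, rfl⟩,
    fun _ => rfl,
    fun _ b hab => ⟨π.symm b, hab.trans (congrArg D.t (π.apply_symm_apply b).symm)⟩,
    fun x y => ⟨fun hxy => Or.inl ⟨x, y, rfl, rfl, hxy⟩, ?_⟩,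
    fun _ => rfl, fun _ => rfl⟩⟩
  rintro (⟨a, b, rfl, rfl, hab⟩ | ⟨_, _, _, _, hab⟩ | ⟨_, b, _, _, _, hb⟩)
  · exact hab
  · exact hab.elim
  · exact absurd (π.apply_symm_apply b).symm (hb (π.symm b))

theorem exists_interfaceConsistent_relabelSource (D : Iposet) :
    ∃ π, InterfaceConsistent (D.relabelSource π) := by
  obtain ⟨π, hπ⟩ := Fin.exists_perm_monotone_matching (fun i j => D.s i = D.t j)
    (fun _ _ _ hb hb' => D.t_inj (hb.symm.trans hb'))
    (fun _ _ _ ha ha' => D.s_inj (ha.trans ha'.symm))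
  refine ⟨π, fun i j i' j' hi hj => ?_⟩
  exact lt_iff_lt_of_monotone_matching (fun i j => D.s (π i) = D.t j)
    (fun _ _ _ hb hb' => D.t_inj (hb.symm.trans hb')) hπ hi hj

theorem exists_interfaceConsistent_relabelTarget (D : Iposet) :
    ∃ π, InterfaceConsistent (D.relabelTarget π) := by
  obtain ⟨π, hπ⟩ := Fin.exists_perm_monotone_matching (fun j i => D.s i = D.t j)
    (fun _ _ _ ha ha' => D.s_inj (ha.trans ha'.symm))
    (fun _ _ _ hb hb' => D.t_inj (hb.symm.trans hb'))
  refine ⟨π, fun i j i' j' hi hj => ?_⟩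
  exact (lt_iff_lt_of_monotone_matching (fun j i => D.s i = D.t (π j))
    (fun _ _ _ ha ha' => D.s_inj (ha.trans ha'.symm)) hπ hi hj).symm

end Iposet

open Iposet in
/-- Every discrete iposet `D` can be written as a gluing `D = σ * Q` and as
`D = R * τ` with `σ`, `τ` symmetries and `Q`, `R` interface-consistent
discrete iposets. -/
theorem discrete_symmetry_decomp (D : Iposet) (h : Discrete D) :
    (∃ σ Q : Iposet, Symmetry σ ∧ Discrete Q ∧ InterfaceConsistent Q ∧
      IsGluing σ Q D) ∧
    (∃ R τ : Iposet, Symmetry τ ∧ Discrete R ∧ InterfaceConsistent R ∧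
      IsGluing R τ D) := by
  obtain ⟨π, hπ⟩ := D.exists_interfaceConsistent_relabelSource
  obtain ⟨π', hπ'⟩ := D.exists_interfaceConsistent_relabelTarget
  exact ⟨⟨ofPerms 1 π, D.relabelSource π, symmetry_ofPerms 1 π, h, hπ,
      D.isGluing_ofPerms_relabelSource π⟩,
    ⟨D.relabelTarget π', ofPerms π' 1, symmetry_ofPerms π' 1, h, hπ',
      D.isGluing_relabelTarget_ofPerms π'⟩⟩
end
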